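/- arXiv:1511.05522 — 8 statements merged into one kernel-verified Lean document; each statement's English description precedes it below -/
import Mathlib

section
/- For all x ∈ K and g₁, g₂ ∈ G = A ⋊_F K one has κ_{x,g₁g₂} = κ_{x,g₁} · κ_{x◁g₁,g₂} in A. -/
open scoped BigOperators

section Defs

variable {A K : Type*} [CommGroup A] [Group K] [MulDistribMulAction K A]

/-- The product of the twisted (semidirect) product `G = A ⋊_F K`:
`(a₁,k₁)·(a₂,k₂) = (a₁ · ᵏ¹a₂ · F(k₁,k₂), k₁k₂)`. -/
def sdMul (F : K → K → A) (g₁ g₂ : A × K) : A × K :=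
  (g₁.1 * g₁.2 • g₂.1 * F g₁.2 g₂.2, g₁.2 * g₂.2)

/-- The right action of `G = A ⋊_F K` on `K`:  `x ◁ (a,k) = x * k`. -/
def sdAct (x : K) (g : A × K) : K := x * g.2

/-- `κ : K × G → A`, `κ_{x,(a,k)} = ˣa · F(x,k)`. -/
def kap (F : K → K → A) (x : K) (g : A × K) : A := x • g.1 * F x g.2

/-- Underlying type of the group of cochains `C^q(G, Map(K,ℂˣ))`. -/
abbrev Cq (A K : Type*) (q : ℕ) := K → (Fin q → A × K) → ℂˣ

/-- Normalization condition for cochains in `C^q(G, Map(K,ℂˣ))`: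
`f(x; g₁,…,g_q) = 1` whenever some `gᵢ = 1`. -/
def NormG {q : ℕ} (f : Cq A K q) : Prop :=
  ∀ x g, (∃ i, g i = ((1 : A), (1 : K))) → f x g = 1

/-- The differential `δ_G : C^q(G, Map(K,ℂˣ)) → C^{q+1}(G, Map(K,ℂˣ))`. -/
def deltaG (F : K → K → A) {q : ℕ} (f : Cq A K q) : Cq A K (q + 1) := fun x g =>
  f (sdAct x (g 0)) (Fin.tail g) *
    ∏ i : Fin (q + 1), f x (Fin.contractNth i (sdMul F) g) ^ ((-1 : ℤ) ^ ((i : ℕ) + 1))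

/-- Underlying type of the group of cochains `C^q(A, ℂˣ)`. -/
abbrev CqA (A : Type*) (q : ℕ) := (Fin q → A) → ℂˣ

/-- Normalization condition for cochains in `C^q(A, ℂˣ)`. -/
def NormA {q : ℕ} (α : CqA A q) : Prop := ∀ a, (∃ i, a i = 1) → α a = 1

/-- The differential `δ_A` on `C^*(A, ℂˣ)` (trivial `A`-action on `ℂˣ`). -/
def deltaA {q : ℕ} (α : CqA A q) : CqA A (q + 1) := fun a =>
  α (Fin.tail a) *
    ∏ i : Fin (q + 1), α (Fin.contractNth i (· * ·) a) ^ ((-1 : ℤ) ^ ((i : ℕ) + 1))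

/-- The restriction map `ψ : C^q(G, Map(K,ℂˣ)) → C^q(A, ℂˣ)`,
`ψ(f)(a₁,…,a_q) = f(1; (a₁,1),…,(a_q,1))`. -/
def psiA {q : ℕ} (f : Cq A K q) : CqA A q := fun a => f 1 fun i => (a i, 1)

/-- The map `φ : C^q(A, ℂˣ) → C^q(G, Map(K,ℂˣ))`,
`φ(α)(x; g₁,…,g_q) = α(κ_{x,g₁}, κ_{x◁g₁,g₂}, …, κ_{x◁g₁⋯g_{q-1},g_q})`. -/
def phiA (F : K → K → A) {q : ℕ} (α : CqA A q) : Cq A K q := fun x g =>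
  α fun i => kap F (x * ((List.ofFn fun j => (g j).2).take (i : ℕ)).prod) (g i)

/-- The right `K`-action `f ◁ k` on `C^q(G, Map(K,ℂˣ))`: `(f ◁ k)(x; g) = f(kx; g)`. -/
def rAct {q : ℕ} (f : Cq A K q) (k : K) : Cq A K q := fun x g => f (k * x) g

/-- Underlying type of `C^p(K, C^q(G, Map(K,ℂˣ)))`. -/
abbrev Cpq (A K : Type*) (p q : ℕ) := (Fin p → K) → Cq A K q

/-- Normalization in the `K`-variables. -/
def NormK {p q : ℕ} (h : Cpq A K p q) : Prop := ∀ k, (∃ i, k i = 1) → h k = 1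

/-- The differential `δ_K : C^p(K, C^q(G,Map(K,ℂˣ))) → C^{p+1}(K, C^q(G,Map(K,ℂˣ)))`. -/
def deltaK {p q : ℕ} (h : Cpq A K p q) : Cpq A K (p + 1) q := fun k =>
  h (Fin.tail k) *
    (∏ i : Fin p, h (Fin.contractNth i.castSucc (· * ·) k) ^ ((-1 : ℤ) ^ ((i : ℕ) + 1))) *
    rAct (h (Fin.init k)) (k (Fin.last p)) ^ ((-1 : ℤ) ^ (p + 1))

end Defs

/-- For all `x ∈ K` and `g₁, g₂ ∈ G = A ⋊_F K` one has
`κ_{x,g₁g₂} = κ_{x,g₁} · κ_{x◁g₁,g₂}` in `A`. -/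
theorem statement0 {A K : Type*} [CommGroup A] [Group K] [Finite A] [Finite K]
    [MulDistribMulAction K A]
    (F : K → K → A)
    (hFn : ∀ k : K, F 1 k = 1 ∧ F k 1 = 1)
    (hF : ∀ k₁ k₂ k₃ : K, k₁ • F k₂ k₃ * F k₁ (k₂ * k₃) = F (k₁ * k₂) k₃ * F k₁ k₂)
    (x : K) (g₁ g₂ : A × K) :
    kap F x (sdMul F g₁ g₂) = kap F x g₁ * kap F (sdAct x g₁) g₂ := by
  obtain ⟨a₁, k₁⟩ := g₁; obtain ⟨a₂, k₂⟩ := g₂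
  simp only [kap, sdMul, sdAct, smul_mul', mul_smul]
  have h := hF x k₁ k₂
  rw [mul_assoc, mul_assoc, h]
  ac_rfl
end

section
/- For every q ≥ 1 and every normalized cochain α ∈ C^q(A,ℂˣ): (i) δ_G(φ(α)) = φ(δ_A α) in C^{q+1}(G,Map(K,ℂˣ)), and (ii) ψ(φ(α)) = α. In particular φ is a morphism of complexes and a section of ψ. -/
open scoped BigOperators

section Aux

lemma partialProd_contractNth {G : Type*} [Group G] {n : ℕ} (f : Fin (n + 1) → G)
    (j : Fin (n + 1)) (m : Fin (n + 1)) :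
    Fin.partialProd (Fin.contractNth j (· * ·) f) m = Fin.partialProd f (j.succ.succAbove m) := by
  induction m using Fin.induction with
  | zero =>
    have h0 : j.succ.succAbove 0 = Fin.castSucc 0 :=
      Fin.succAbove_of_castSucc_lt _ _ (by simp [Fin.lt_def])
    rw [h0]
    simp
  | succ m ih =>
    rw [Fin.partialProd_succ, ih, ← Fin.inv_partialProd_mul_eq_contractNth f j m,
      mul_inv_cancel_left, Fin.succ_succAbove_succ]

variable {A K : Type*} [CommGroup A] [Group K] [MulDistribMulAction K A]

lemma kap_sdMul (F : K → K → A)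
    (hF : ∀ k₁ k₂ k₃ : K, k₁ • F k₂ k₃ * F k₁ (k₂ * k₃) = F (k₁ * k₂) k₃ * F k₁ k₂)
    (y : K) (u v : A × K) :
    kap F y (sdMul F u v) = kap F y u * kap F (y * u.2) v := by
  have h := hF y u.2 v.2
  simp only [kap, sdMul, smul_mul', mul_smul]
  calc y • u.1 * (y • u.2 • v.1) * y • F u.2 v.2 * F y (u.2 * v.2)
      = y • u.1 * (y • u.2 • v.1) * (y • F u.2 v.2 * F y (u.2 * v.2)) := by
        rw [mul_assoc]
    _ = y • u.1 * (y • u.2 • v.1) * (F (y * u.2) v.2 * F y u.2) := by rw [h]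
    _ = y • u.1 * F y u.2 * (y • u.2 • v.1 * F (y * u.2) v.2) := by ac_rfl

end Aux

/-- For every `q ≥ 1` and every normalized `α ∈ C^q(A,ℂˣ)`:
(i) `δ_G(φ(α)) = φ(δ_A α)` and (ii) `ψ(φ(α)) = α`. -/
theorem statement1 {A K : Type*} [CommGroup A] [Group K] [Finite A] [Finite K]
    [MulDistribMulAction K A]
    (F : K → K → A)
    (hFn : ∀ k : K, F 1 k = 1 ∧ F k 1 = 1)
    (hF : ∀ k₁ k₂ k₃ : K, k₁ • F k₂ k₃ * F k₁ (k₂ * k₃) = F (k₁ * k₂) k₃ * F k₁ k₂)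
    (q : ℕ) (hq : 1 ≤ q) (α : CqA A q) (hα : NormA α) :
    deltaG F (phiA F α) = phiA F (deltaA α) ∧ psiA (phiA F α) = α := by
  have kapmul := kap_sdMul F hF
  constructor
  · funext x g
    have hphi : ∀ (β : CqA A q) (y : K) (h : Fin q → A × K),
        phiA F β y h =
          β (fun j => kap F (y * Fin.partialProd (fun l => (h l).2) j.castSucc) (h j)) :=
      fun _ _ _ => rfl
    have key : phiA F (deltaA α) x g =
        deltaA α (fun i =>
          kap F (x * Fin.partialProd (fun l => (g l).2) i.castSucc) (g i)) := rfl
    rw [key]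
    set ks : Fin (q + 1) → K := fun l => (g l).2 with hks
    set κ : Fin (q + 1) → A :=
      fun i => kap F (x * Fin.partialProd ks i.castSucc) (g i) with hκ
    show deltaG F (phiA F α) x g = deltaA α κ
    rw [deltaG, deltaA]
    congr 1
    · -- first factor
      rw [hphi]
      refine congrArg α (funext fun j => ?_)
      show kap F (sdAct x (g 0) * Fin.partialProd (Fin.tail ks) j.castSucc) (g j.succ)
        = kap F (x * Fin.partialProd ks (Fin.castSucc j.succ)) (g j.succ)
      rw [← Fin.succ_castSucc, Fin.partialProd_succ', ← mul_assoc]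
      rfl
    · refine Finset.prod_congr rfl fun i _ => ?_
      congr 1
      rw [hphi]
      have hsec : (fun l => ((Fin.contractNth i (sdMul F) g) l).2)
          = Fin.contractNth i (· * ·) ks := by
        funext l
        rcases lt_trichotomy (l : ℕ) (i : ℕ) with h | h | h
        · rw [Fin.contractNth_apply_of_lt _ _ _ _ h, Fin.contractNth_apply_of_lt _ _ _ _ h]
        · rw [Fin.contractNth_apply_of_eq _ _ _ _ h, Fin.contractNth_apply_of_eq _ _ _ _ h]
          rfl
        · rw [Fin.contractNth_apply_of_gt _ _ _ _ h, Fin.contractNth_apply_of_gt _ _ _ _ h]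
      rw [hsec]
      refine congrArg α (funext fun j => ?_)
      rcases lt_trichotomy (j : ℕ) (i : ℕ) with h | h | h
      · rw [Fin.contractNth_apply_of_lt _ _ _ _ h, Fin.contractNth_apply_of_lt _ _ _ _ h,
          partialProd_contractNth,
          Fin.succAbove_of_castSucc_lt _ _ (by simp [Fin.lt_def]; omega)]
      · rw [Fin.contractNth_apply_of_eq _ _ _ _ h, Fin.contractNth_apply_of_eq _ _ _ _ h,
          partialProd_contractNth,
          Fin.succAbove_of_castSucc_lt _ _ (by simp [Fin.lt_def]; omega),
          kapmul]
        congr 1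
        show kap F (x * Fin.partialProd ks (Fin.castSucc j).castSucc * ks j.castSucc) (g j.succ)
          = kap F (x * Fin.partialProd ks (Fin.castSucc j.succ)) (g j.succ)
        rw [← Fin.succ_castSucc, Fin.partialProd_succ, ← mul_assoc]
      · rw [Fin.contractNth_apply_of_gt _ _ _ _ h, Fin.contractNth_apply_of_gt _ _ _ _ h,
          partialProd_contractNth,
          Fin.succAbove_of_le_castSucc _ _ (by simp [Fin.le_def]; omega),
          Fin.succ_castSucc]
  · funext a
    have : ∀ i : Fin q,
        kap F (1 * ((List.ofFn fun _ : Fin q => (1 : K)).take (i : ℕ)).prod)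
          ((a i, (1 : K)) : A × K) = a i := by
      intro i
      have h1 : ((List.ofFn fun _ : Fin q => (1 : K)).take (i : ℕ)).prod = 1 := by
        simp [List.ofFn_const, List.take_replicate]
      rw [h1, mul_one]
      simp [kap, (hFn 1).1]
    exact congrArg α (funext this)
end

section
/- For every q ≥ 1, every normalized cochain α ∈ C^q(A,ℂˣ) and every k ∈ K, one has ψ(φ(α) ◁ k) = α^k, where α^k(a₁,…,a_q) := α(ᵏa₁,…,ᵏa_q). (This is the key identity showing that ψ and φ induce K-equivariant isomorphisms in cohomology.) -/
open scoped BigOperators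

/-- For every `q ≥ 1`, every normalized `α ∈ C^q(A,ℂˣ)` and every `k ∈ K`,
`ψ(φ(α) ◁ k) = α^k`, where `α^k(a₁,…,a_q) = α(ᵏa₁,…,ᵏa_q)`. -/
theorem statement3 {A K : Type*} [CommGroup A] [Group K] [Finite A] [Finite K]
    [MulDistribMulAction K A]
    (F : K → K → A)
    (hFn : ∀ k : K, F 1 k = 1 ∧ F k 1 = 1)
    (hF : ∀ k₁ k₂ k₃ : K, k₁ • F k₂ k₃ * F k₁ (k₂ * k₃) = F (k₁ * k₂) k₃ * F k₁ k₂)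
    (q : ℕ) (hq : 1 ≤ q) (α : CqA A q) (hα : NormA α) (k : K) :
    psiA (rAct (phiA F α) k) = fun a => α fun i => k • a i := by
  funext a
  simp only [psiA, rAct, phiA, kap]
  congr 1
  funext i
  have hlist : (List.ofFn fun j : Fin q => ((a j, (1 : K)) : A × K).2) =
      List.replicate q 1 := by
    simp [List.ofFn_const]
  rw [hlist]
  have : ((List.replicate q (1 : K)).take (i : ℕ)).prod = 1 := by
    rw [List.take_replicate]; simp
  rw [this, (hFn _).2, mul_one, mul_one]
  rw [mul_one]
end

section
/- Let q ≥ 1 and f ∈ C^q(G,Map(K,ℂˣ)) with δ_G f = 1. If there exists c ∈ C^{q-1}(A,ℂˣ) with ψ(f) = δ_A c, then there exists h ∈ C^{q-1}(G,Map(K,ℂˣ)) with f = δ_G h. (Together with the fact that ψ∘φ = id, this expresses that ψ induces an isomorphism H^q(G,Map(K,ℂˣ)) ≅ H^q(A,ℂˣ).) -/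
open scoped BigOperators

namespace St5

variable {A K : Type*} [CommGroup A] [Group K] [MulDistribMulAction K A]
variable (F : K → K → A)

/-- explicit inverse for `sdMul F` -/
def invG (g : A × K) : A × K := ((g.2⁻¹ • (g.1 * F g.2 g.2⁻¹))⁻¹, g.2⁻¹)

section Grp

variable (hFn : ∀ k : K, F 1 k = 1 ∧ F k 1 = 1)
variable (hF : ∀ k₁ k₂ k₃ : K, k₁ • F k₂ k₃ * F k₁ (k₂ * k₃) = F (k₁ * k₂) k₃ * F k₁ k₂)
include hFn hF
set_option linter.unusedSectionVars false

theorem mul_one' (g : A × K) : sdMul F g (1, 1) = g := by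
  simp [sdMul, (hFn g.2).2]

theorem one_mul' (g : A × K) : sdMul F (1, 1) g = g := by
  simp [sdMul, (hFn g.2).1]

theorem mul_assoc' (a b c : A × K) :
    sdMul F (sdMul F a b) c = sdMul F a (sdMul F b c) := by
  have h := hF a.2 b.2 c.2
  ext
  · show a.1 * a.2 • b.1 * F a.2 b.2 * (a.2 * b.2) • c.1 * F (a.2 * b.2) c.2 =
      a.1 * a.2 • (b.1 * b.2 • c.1 * F b.2 c.2) * F a.2 (b.2 * c.2)
    rw [smul_mul', smul_mul', mul_smul]
    calc a.1 * a.2 • b.1 * F a.2 b.2 * a.2 • b.2 • c.1 * F (a.2 * b.2) c.2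
        = a.1 * a.2 • b.1 * a.2 • b.2 • c.1 * (F (a.2 * b.2) c.2 * F a.2 b.2) := by
          simp [mul_comm, mul_left_comm, mul_assoc]
      _ = a.1 * a.2 • b.1 * a.2 • b.2 • c.1 * (a.2 • F b.2 c.2 * F a.2 (b.2 * c.2)) := by rw [h]
      _ = a.1 * (a.2 • b.1 * a.2 • b.2 • c.1 * a.2 • F b.2 c.2) * F a.2 (b.2 * c.2) := by
          simp [mul_comm, mul_left_comm, mul_assoc]
  · show a.2 * b.2 * c.2 = a.2 * (b.2 * c.2)
    exact mul_assoc _ _ _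

theorem mul_invG (g : A × K) : sdMul F g (invG F g) = (1, 1) := by
  ext
  · show g.1 * g.2 • (g.2⁻¹ • (g.1 * F g.2 g.2⁻¹))⁻¹ * F g.2 g.2⁻¹ = 1
    rw [smul_inv', smul_smul, mul_inv_cancel, one_smul, mul_inv_rev]
    simp [mul_comm, mul_left_comm, mul_assoc]
  · exact mul_inv_cancel g.2

theorem invG_mul (g : A × K) : sdMul F (invG F g) g = (1, 1) := by
  have h1 : sdMul F (sdMul F (invG F g) g) (invG F g) = invG F g := by
    rw [mul_assoc' F hFn hF, mul_invG F hFn hF, mul_one' F hFn hF]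
  have hgb : sdMul F g (invG F g) = (1,1) := mul_invG F hFn hF g
  have hee : sdMul F (sdMul F (invG F g) g) (sdMul F (invG F g) g) = sdMul F (invG F g) g := by
    rw [mul_assoc' F hFn hF, ← mul_assoc' F hFn hF g (invG F g) g, hgb, one_mul' F hFn hF]
  have hinv : sdMul F (sdMul F (invG F g) g) (invG F (sdMul F (invG F g) g)) = (1,1) :=
    mul_invG F hFn hF _
  calc sdMul F (invG F g) g
      = sdMul F (sdMul F (invG F g) g) (1,1) := (mul_one' F hFn hF _).symm
    _ = sdMul F (sdMul F (invG F g) g)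
          (sdMul F (sdMul F (invG F g) g) (invG F (sdMul F (invG F g) g))) := by rw [hinv]
    _ = sdMul F (sdMul F (sdMul F (invG F g) g) (sdMul F (invG F g) g))
          (invG F (sdMul F (invG F g) g)) := (mul_assoc' F hFn hF _ _ _).symm
    _ = sdMul F (sdMul F (invG F g) g) (invG F (sdMul F (invG F g) g)) := by rw [hee]
    _ = (1,1) := hinv

theorem inv_mul_cancel_left' (g h : A × K) :
    sdMul F (invG F g) (sdMul F g h) = h := by
  rw [← mul_assoc' F hFn hF, invG_mul F hFn hF, one_mul' F hFn hF]

theorem mul_inv_cancel_left' (g h : A × K) :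
    sdMul F g (sdMul F (invG F g) h) = h := by
  rw [← mul_assoc' F hFn hF, mul_invG F hFn hF, one_mul' F hFn hF]

theorem inv_unique {g b : A × K} (h : sdMul F g b = (1,1)) : b = invG F g := by
  have := congrArg (sdMul F (invG F g)) h
  rwa [← mul_assoc' F hFn hF, invG_mul F hFn hF, one_mul' F hFn hF, mul_one' F hFn hF] at this

theorem invG_mul_rev (g h : A × K) :
    invG F (sdMul F g h) = sdMul F (invG F h) (invG F g) := by
  refine (inv_unique F hFn hF ?_).symm
  rw [mul_assoc' F hFn hF, ← mul_assoc' F hFn hF h, mul_invG F hFn hF, one_mul' F hFn hF,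
    mul_invG F hFn hF]

theorem diff_translate (z v v' : A × K) :
    sdMul F (invG F (sdMul F z v)) (sdMul F z v') = sdMul F (invG F v) v' := by
  rw [invG_mul_rev F hFn hF, mul_assoc' F hFn hF, ← mul_assoc' F hFn hF (invG F z),
    invG_mul F hFn hF, one_mul' F hFn hF]

theorem mulA (a : A) (g : A × K) : sdMul F ((a,1) : A × K) g = (a * g.1, g.2) := by
  simp [sdMul, (hFn g.2).1]

theorem invG_A (a : A) : invG F ((a,1) : A × K) = ((a⁻¹ : A), (1 : K)) := by
  refine (inv_unique F hFn hF ?_).symm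
  rw [mulA F hFn hF]; simp

end Grp


section Core
variable {A K : Type*} [CommGroup A] [Group K] [MulDistribMulAction K A]
variable (F : K → K → A)

/-- extend a finite tuple to `ℕ → A × K` by the identity -/
def ext {n : ℕ} (g : Fin n → A × K) : ℕ → A × K :=
  fun j => if h : j < n then g ⟨j, h⟩ else ((1 : A), (1 : K))

/-- partial products `(1,x), (1,x)g₀, (1,x)g₀g₁, …` -/
def ppN (x : K) (w : ℕ → A × K) : ℕ → A × K
  | 0 => ((1 : A), x)
  | j+1 => sdMul F (ppN x w j) (w j)

/-- homogenization of an inhomogeneous cochain -/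
def toHom (n : ℕ) (f : Cq A K n) : (ℕ → A × K) → ℂˣ :=
  fun w => f (w 0).2 fun i : Fin n => sdMul F (invG F (w (i : ℕ))) (w ((i : ℕ)+1))

/-- inhomogenization of a homogeneous cochain -/
def toInhom (n : ℕ) (θ : (ℕ → A × K) → ℂˣ) : Cq A K n :=
  fun x g => θ (ppN F x (ext g))

/-- delete the `k`-th entry -/
def del (k : ℕ) (w : ℕ → A × K) : ℕ → A × K := fun j => if j < k then w j else w (j+1)

/-- the retraction `G → A × {1}` -/
def uG : A × K → A × K := fun g => (g.1, (1 : K))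

/-- prism operator on tuples -/
def pr (i : ℕ) (w : ℕ → A × K) : ℕ → A × K :=
  fun j => if j ≤ i then uG (w j) else w (j-1)

/-- apply `uG` to the first `m+1` entries -/
def uptil (m : ℕ) (w : ℕ → A × K) : ℕ → A × K :=
  fun j => if j ≤ m then uG (w j) else w j

/-- homogeneous differential -/
def hdel (m : ℕ) (θ : (ℕ → A × K) → ℂˣ) : (ℕ → A × K) → ℂˣ :=
  fun w => ∏ k ∈ Finset.range (m+1), θ (del k w) ^ ((-1 : ℤ)^k)

/-- homotopy operator -/
def HH (m : ℕ) (θ : (ℕ → A × K) → ℂˣ) : (ℕ → A × K) → ℂˣ :=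
  fun w => ∏ i ∈ Finset.range m, θ (pr i w) ^ ((-1 : ℤ)^i)

/-- invariance under left translation by `A × {1}` -/
def AInv (θ : (ℕ → A × K) → ℂˣ) : Prop :=
  ∀ (a : A) (w : ℕ → A × K), θ (fun j => sdMul F ((a, 1)) (w j)) = θ w

/-- dependence on the first `L` coordinates only -/
def Dep (L : ℕ) (θ : (ℕ → A × K) → ℂˣ) : Prop :=
  ∀ w w' : ℕ → A × K, (∀ j < L, w j = w' j) → θ w = θ w'

end Core

end St5

namespace St5
section Lemmas
variable {A K : Type*} [CommGroup A] [Group K] [MulDistribMulAction K A]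
variable (F : K → K → A)
variable (hFn : ∀ k : K, F 1 k = 1 ∧ F k 1 = 1)
variable (hF : ∀ k₁ k₂ k₃ : K, k₁ • F k₂ k₃ * F k₁ (k₂ * k₃) = F (k₁ * k₂) k₃ * F k₁ k₂)
include hFn hF
set_option linter.unusedSectionVars false

theorem hom_inhom (n : ℕ) (f : Cq A K n) : toInhom F n (toHom F n f) = f := by
  funext x g
  have h : (fun i : Fin n => sdMul F (invG F (ppN F x (ext g) (i:ℕ)))
      (ppN F x (ext g) ((i:ℕ)+1))) = g := by
    funext i
    show sdMul F (invG F (ppN F x (ext g) (i:ℕ)))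
      (sdMul F (ppN F x (ext g) (i:ℕ)) (ext g (i:ℕ))) = g i
    rw [inv_mul_cancel_left' F hFn hF]
    simp [ext, i.isLt]
  show toHom F n f (ppN F x (ext g)) = f x g
  unfold toHom
  rw [h]
  rfl

theorem AInv_toHom (n : ℕ) (f : Cq A K n) : AInv F (toHom F n f) := by
  intro a w
  have h1 : (sdMul F ((a,1) : A × K) (w 0)).2 = (w 0).2 := by rw [mulA F hFn hF]
  show toHom F n f (fun j => sdMul F ((a,1)) (w j)) = toHom F n f w
  unfold toHom
  rw [h1]
  congr 1
  funext i
  exact diff_translate F hFn hF _ _ _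

theorem Dep_toHom (n : ℕ) (f : Cq A K n) : Dep (n+1) (toHom F n f) := by
  intro w w' h
  unfold toHom
  rw [h 0 (by omega)]
  congr 1
  funext i
  have hi := i.isLt
  rw [h (i:ℕ) (by omega), h ((i:ℕ)+1) (by omega)]

theorem del_translate (a : A) (k : ℕ) (w : ℕ → A × K) :
    del k (fun j => sdMul F ((a,1)) (w j)) = fun j => sdMul F ((a,1)) (del k w j) := by
  funext j; unfold del; split <;> rfl

theorem uG_translate (a : A) (g : A × K) :
    uG (sdMul F ((a,1)) g) = sdMul F ((a,1)) (uG g) := by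
  simp [uG, mulA F hFn hF]

theorem pr_translate (a : A) (i : ℕ) (w : ℕ → A × K) :
    pr i (fun j => sdMul F ((a,1)) (w j)) = fun j => sdMul F ((a,1)) (pr i w j) := by
  funext j; unfold pr; split
  · exact uG_translate F hFn hF a _
  · rfl

theorem uptil_translate (a : A) (m : ℕ) (w : ℕ → A × K) :
    uptil m (fun j => sdMul F ((a,1)) (w j)) = fun j => sdMul F ((a,1)) (uptil m w j) := by
  funext j; unfold uptil; split
  · exact uG_translate F hFn hF a _
  · rfl

theorem AInv_hdel (m : ℕ) (θ : (ℕ → A × K) → ℂˣ) (h : AInv F θ) : AInv F (hdel m θ) := by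
  intro a w
  unfold hdel
  refine Finset.prod_congr rfl fun k _ => ?_
  rw [del_translate F hFn hF, h a (del k w)]

theorem AInv_HH (m : ℕ) (θ : (ℕ → A × K) → ℂˣ) (h : AInv F θ) : AInv F (HH m θ) := by
  intro a w
  unfold HH
  refine Finset.prod_congr rfl fun i _ => ?_
  rw [pr_translate F hFn hF, h a (pr i w)]

theorem AInv_uptil (m : ℕ) (θ : (ℕ → A × K) → ℂˣ) (h : AInv F θ) :
    AInv F (fun w => θ (uptil m w)) := by
  intro a w
  simp only []
  rw [uptil_translate F hFn hF, h a (uptil m w)]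

theorem Dep_hdel (L m : ℕ) (θ : (ℕ → A × K) → ℂˣ) (h : Dep L θ) :
    Dep (L+1) (hdel m θ) := by
  intro w w' hw
  unfold hdel
  refine Finset.prod_congr rfl fun k _ => ?_
  have : θ (del k w) = θ (del k w') := by
    refine h _ _ fun j hj => ?_
    unfold del; split
    · exact hw j (by omega)
    · exact hw (j+1) (by omega)
  rw [this]

theorem Dep_HH (L m : ℕ) (θ : (ℕ → A × K) → ℂˣ) (h : Dep (L+1) θ) (hm : m ≤ L) :
    Dep L (HH m θ) := by
  intro w w' hw
  unfold HH
  refine Finset.prod_congr rfl fun i hi => ?_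
  have hi' : i < m := Finset.mem_range.mp hi
  have : θ (pr i w) = θ (pr i w') := by
    refine h _ _ fun j hj => ?_
    unfold pr; split
    · rename_i hji
      rw [hw j (by omega)]
    · exact hw (j-1) (by omega)
  rw [this]

theorem HH_one (m : ℕ) : HH m (fun (_ : ℕ → A × K) => (1:ℂˣ)) = fun _ => 1 := by
  funext w; simp [HH]

end Lemmas
end St5
namespace St5
section Lemmas2
variable {A K : Type*} [CommGroup A] [Group K] [MulDistribMulAction K A]
variable (F : K → K → A)
variable (hFn : ∀ k : K, F 1 k = 1 ∧ F k 1 = 1)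
variable (hF : ∀ k₁ k₂ k₃ : K, k₁ • F k₂ k₃ * F k₁ (k₂ * k₃) = F (k₁ * k₂) k₃ * F k₁ k₂)
include hFn hF
set_option linter.unusedSectionVars false

theorem ext_lt {n : ℕ} (g : Fin n → A × K) {j : ℕ} (h : j < n) :
    ext g j = g ⟨j, h⟩ := by simp [ext, h]

theorem ext_ge {n : ℕ} (g : Fin n → A × K) {j : ℕ} (h : ¬ j < n) :
    ext g j = ((1:A), (1:K)) := by simp [ext, h]

theorem claimA (n : ℕ) (x : K) (g : Fin (n+1) → A × K) :
    ∀ j, j < n + 1 →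
      sdMul F ((x • (g 0).1 * F x (g 0).2, 1))
        (ppN F (x * (g 0).2) (ext (Fin.tail g)) j) = del 0 (ppN F x (ext g)) j := by
  intro j
  induction j with
  | zero =>
    intro _
    show sdMul F ((x • (g 0).1 * F x (g 0).2, 1)) ((1 : A), x * (g 0).2)
      = ppN F x (ext g) 1
    rw [mulA F hFn hF]
    show _ = sdMul F ((1:A), x) (ext g 0)
    rw [ext_lt F hFn hF g (by omega : 0 < n+1)]
    show (x • (g 0).1 * F x (g 0).2 * 1, x * (g 0).2)
      = (1 * x • (g ⟨0, _⟩).1 * F x (g ⟨0, _⟩).2, x * (g ⟨0, _⟩).2)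
    have h0 : (⟨0, by omega⟩ : Fin (n+1)) = 0 := rfl
    rw [h0]
    simp
  | succ j ih =>
    intro hj
    have hjn : j < n + 1 := by omega
    show sdMul F _ (sdMul F (ppN F (x * (g 0).2) (ext (Fin.tail g)) j) (ext (Fin.tail g) j))
      = del 0 (ppN F x (ext g)) (j+1)
    rw [← mul_assoc' F hFn hF, ih hjn]
    have h1 : del 0 (ppN F x (ext g)) (j+1) = ppN F x (ext g) (j+2) := by
      unfold del; simp
    have h2 : del 0 (ppN F x (ext g)) j = ppN F x (ext g) (j+1) := by
      unfold del; simp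
    rw [h1, h2]
    show sdMul F (ppN F x (ext g) (j+1)) (ext (Fin.tail g) j)
      = sdMul F (ppN F x (ext g) (j+1)) (ext g (j+1))
    congr 1
    by_cases hn : j < n
    · rw [ext_lt F hFn hF _ hn, ext_lt F hFn hF g (by omega : j+1 < n+1)]
      rfl
    · rw [ext_ge F hFn hF _ hn, ext_ge F hFn hF g (by omega : ¬ j+1 < n+1)]

theorem claimB (n : ℕ) (x : K) (g : Fin (n+1) → A × K) (i : Fin (n+1)) :
    ∀ j, j < n + 1 →
      ppN F x (ext (Fin.contractNth i (sdMul F) g)) j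
        = del ((i:ℕ)+1) (ppN F x (ext g)) j := by
  intro j
  induction j with
  | zero =>
    intro _
    show ((1:A), x) = del ((i:ℕ)+1) (ppN F x (ext g)) 0
    unfold del
    simp only [Nat.zero_lt_succ, if_pos]
    rfl
  | succ j ih =>
    intro hj
    have hjn : j < n := by omega
    have ihj := ih (by omega)
    show sdMul F (ppN F x (ext (Fin.contractNth i (sdMul F) g)) j)
        (ext (Fin.contractNth i (sdMul F) g) j) = _
    rw [ihj, ext_lt F hFn hF _ hjn]
    rcases lt_trichotomy j (i:ℕ) with hlt | heq | hgt
    · -- j < i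
      have hc : Fin.contractNth i (sdMul F) g ⟨j, hjn⟩ = g ⟨j, by omega⟩ := by
        unfold Fin.contractNth
        simp only [Fin.val_mk]
        rw [if_pos hlt]
        rfl
      have hd1 : del ((i:ℕ)+1) (ppN F x (ext g)) j = ppN F x (ext g) j := by
        unfold del; rw [if_pos (by omega)]
      have hd2 : del ((i:ℕ)+1) (ppN F x (ext g)) (j+1) = ppN F x (ext g) (j+1) := by
        unfold del; rw [if_pos (by omega)]
      rw [hc, hd1, hd2]
      show _ = sdMul F (ppN F x (ext g) j) (ext g j)
      rw [ext_lt F hFn hF g (by omega : j < n+1)]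
    · -- j = i
      have hin : (i:ℕ) < n := by omega
      have hc : Fin.contractNth i (sdMul F) g ⟨j, hjn⟩
          = sdMul F (g ⟨j, by omega⟩) (g ⟨j+1, by omega⟩) := by
        unfold Fin.contractNth
        simp only [Fin.val_mk]
        rw [if_neg (by omega), if_pos heq]
        rfl
      have hd1 : del ((i:ℕ)+1) (ppN F x (ext g)) j = ppN F x (ext g) j := by
        unfold del; rw [if_pos (by omega)]
      have hd2 : del ((i:ℕ)+1) (ppN F x (ext g)) (j+1) = ppN F x (ext g) (j+2) := by
        unfold del; rw [if_neg (by omega)]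
      rw [hc, hd1, hd2]
      show _ = sdMul F (sdMul F (ppN F x (ext g) j) (ext g j)) (ext g (j+1))
      rw [ext_lt F hFn hF g (by omega : j < n+1), ext_lt F hFn hF g (by omega : j+1 < n+1),
        ← mul_assoc' F hFn hF]
    · -- j > i
      have hc : Fin.contractNth i (sdMul F) g ⟨j, hjn⟩ = g ⟨j+1, by omega⟩ := by
        unfold Fin.contractNth
        simp only [Fin.val_mk]
        rw [if_neg (by omega), if_neg (by omega)]
        rfl
      have hd1 : del ((i:ℕ)+1) (ppN F x (ext g)) j = ppN F x (ext g) (j+1) := by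
        unfold del; rw [if_neg (by omega)]
      have hd2 : del ((i:ℕ)+1) (ppN F x (ext g)) (j+1) = ppN F x (ext g) (j+2) := by
        unfold del; rw [if_neg (by omega)]
      rw [hc, hd1, hd2]
      show _ = sdMul F (ppN F x (ext g) (j+1)) (ext g (j+1))
      rw [ext_lt F hFn hF g (by omega : j+1 < n+1)]

theorem inhom_delta (n : ℕ) (θ : (ℕ → A × K) → ℂˣ) (hA : AInv F θ) (hD : Dep (n+1) θ) :
    deltaG F (toInhom F n θ) = toInhom F (n+1) (hdel (n+1) θ) := by
  funext x g
  have hA0 : θ (del 0 (ppN F x (ext g))) = toInhom F n θ (sdAct x (g 0)) (Fin.tail g) := by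
    have h1 : θ (del 0 (ppN F x (ext g)))
        = θ (fun j => sdMul F ((x • (g 0).1 * F x (g 0).2, 1))
            (ppN F (x * (g 0).2) (ext (Fin.tail g)) j)) := by
      refine hD _ _ fun j hj => ?_
      exact (claimA F hFn hF n x g j hj).symm
    rw [h1, hA (x • (g 0).1 * F x (g 0).2) (ppN F (x * (g 0).2) (ext (Fin.tail g)))]
    rfl
  have hB : ∀ (i : Fin (n+1)), θ (del ((i:ℕ)+1) (ppN F x (ext g)))
      = toInhom F n θ x (Fin.contractNth i (sdMul F) g) := by
    intro i
    refine (hD _ _ fun j hj => ?_).symm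
    exact claimB F hFn hF n x g i j hj
  show toInhom F n θ (sdAct x (g 0)) (Fin.tail g) *
      ∏ i : Fin (n+1), toInhom F n θ x (Fin.contractNth i (sdMul F) g) ^ ((-1:ℤ)^((i:ℕ)+1))
      = hdel (n+1) θ (ppN F x (ext g))
  unfold hdel
  rw [Finset.prod_range_succ', mul_comm]
  congr 1
  · rw [← Fin.prod_univ_eq_prod_range
      (fun k => θ (del (k+1) (ppN F x (ext g))) ^ ((-1:ℤ)^(k+1))) (n+1)]
    refine Finset.prod_congr rfl fun i _ => ?_
    rw [hB i]
  · rw [pow_zero, zpow_one, hA0]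

end Lemmas2
end St5
namespace St5
section Lemmas3
variable {A K : Type*} [CommGroup A] [Group K] [MulDistribMulAction K A]
variable (F : K → K → A)
variable (hFn : ∀ k : K, F 1 k = 1 ∧ F k 1 = 1)
variable (hF : ∀ k₁ k₂ k₃ : K, k₁ • F k₂ k₃ * F k₁ (k₂ * k₃) = F (k₁ * k₂) k₃ * F k₁ k₂)
include hFn hF
set_option linter.unusedSectionVars false

theorem vanish (n : ℕ) (θ : (ℕ → A × K) → ℂˣ) (hA : AInv F θ) (hD : Dep (n+1) θ)
    (h1 : toInhom F n θ = 1) : θ = fun _ => 1 := by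
  funext w
  set x := (w 0).2 with hx
  set d : Fin n → A × K := fun i => sdMul F (invG F (w (i:ℕ))) (w ((i:ℕ)+1)) with hdd
  have claim : ∀ j, j < n+1 → sdMul F (((w 0).1, 1)) (ppN F x (ext d) j) = w j := by
    intro j
    induction j with
    | zero =>
      intro _
      show sdMul F (((w 0).1, 1)) ((1:A), x) = w 0
      rw [mulA F hFn hF]
      simp [hx]
    | succ j ih =>
      intro hj
      show sdMul F (((w 0).1, 1)) (sdMul F (ppN F x (ext d) j) (ext d j)) = w (j+1)
      rw [← mul_assoc' F hFn hF, ih (by omega), ext_lt F hFn hF d (by omega : j < n)]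
      show sdMul F (w j) (sdMul F (invG F (w j)) (w (j+1))) = w (j+1)
      exact mul_inv_cancel_left' F hFn hF _ _
  have h2 : θ w = θ (fun j => sdMul F (((w 0).1, 1)) (ppN F x (ext d) j)) :=
    hD _ _ fun j hj => (claim j hj).symm
  rw [h2, hA ((w 0).1) (ppN F x (ext d))]
  show toInhom F n θ x d = 1
  rw [h1]
  rfl

theorem claimK (n : ℕ) (x : K) (g : Fin n → A × K) :
    ∀ j, j ≤ n → (ppN F x (ext g) j).2
      = x * ((List.ofFn fun l : Fin n => (g l).2).take j).prod := by
  intro j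
  induction j with
  | zero => intro _; simp [ppN]
  | succ j ih =>
    intro hj
    have hlen : j < (List.ofFn fun l : Fin n => (g l).2).length := by
      simp; omega
    show (ppN F x (ext g) j).2 * (ext g j).2 = _
    rw [List.prod_take_succ _ _ hlen, ih (by omega), ext_lt F hFn hF g (by omega : j < n),
      mul_assoc]
    congr 1
    simp

theorem lemL (n : ℕ) (θ : (ℕ → A × K) → ℂˣ) (hD : Dep (n+1) θ) :
    toInhom F n (fun w => θ (uptil n w)) = phiA F (psiA (toInhom F n θ)) := by
  funext x g
  set κseq : Fin n → A × K := fun i =>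
    (kap F (x * ((List.ofFn fun l : Fin n => (g l).2).take (i:ℕ)).prod) (g i), (1:K)) with hκ
  have claim : ∀ j, j < n+1 → uptil n (ppN F x (ext g)) j = ppN F 1 (ext κseq) j := by
    intro j
    induction j with
    | zero =>
      intro _
      show uptil n (ppN F x (ext g)) 0 = ((1:A), (1:K))
      unfold uptil
      rw [if_pos (by omega)]
      rfl
    | succ j ih =>
      intro hj
      have hjn : j < n := by omega
      have ihj := ih (by omega)
      have hu1 : uptil n (ppN F x (ext g)) j = uG (ppN F x (ext g) j) := by
        unfold uptil; rw [if_pos (by omega)]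
      have hu2 : uptil n (ppN F x (ext g)) (j+1) = uG (ppN F x (ext g) (j+1)) := by
        unfold uptil; rw [if_pos (by omega)]
      rw [hu2]
      rw [hu1] at ihj
      show uG (sdMul F (ppN F x (ext g) j) (ext g j)) = sdMul F (ppN F 1 (ext κseq) j) (ext κseq j)
      rw [← ihj, ext_lt F hFn hF g hjn, ext_lt F hFn hF κseq hjn]
      show ((ppN F x (ext g) j).1 * (ppN F x (ext g) j).2 • (g ⟨j, hjn⟩).1
          * F (ppN F x (ext g) j).2 (g ⟨j, hjn⟩).2, (1:K))
        = sdMul F ((ppN F x (ext g) j).1, 1) (κseq ⟨j, hjn⟩)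
      rw [hκ]
      show _ = sdMul F ((ppN F x (ext g) j).1, 1)
        (kap F (x * ((List.ofFn fun l : Fin n => (g l).2).take j).prod) (g ⟨j, hjn⟩), (1:K))
      rw [mulA F hFn hF]
      show (_, (1:K)) = (_, (1:K))
      rw [← claimK F hFn hF n x g j (by omega)]
      unfold kap
      rw [mul_assoc]
  have h2 : θ (uptil n (ppN F x (ext g))) = θ (ppN F 1 (ext κseq)) :=
    hD _ _ fun j hj => claim j hj
  exact h2

theorem psi_phi (q : ℕ) (α : CqA A q) : psiA (phiA F α) = α := by
  funext a
  show α (fun i => kap F (1 * ((List.ofFn fun l : Fin q =>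
    (((a l, (1:K)) : A × K)).2).take (i:ℕ)).prod) ((a i, 1))) = α a
  congr 1
  funext i
  have hone : ((List.ofFn fun l : Fin q => (((a l, (1:K)) : A × K)).2).take (i:ℕ)).prod = 1 := by
    apply List.prod_eq_one
    intro y hy
    have := List.mem_of_mem_take hy
    simp at this
    first | exact this.2 | exact this
  rw [hone, mul_one]
  unfold kap
  simp [(hFn 1).2]

theorem psi_delta (n : ℕ) (f : Cq A K n) : psiA (deltaG F f) = deltaA (psiA f) := by
  funext a
  show deltaG F f 1 (fun i => ((a i, 1) : A × K)) = deltaA (psiA f) a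
  unfold deltaG deltaA
  congr 1
  · show f (sdAct 1 ((a 0, 1))) (Fin.tail fun i => ((a i, 1) : A × K))
      = f 1 (fun i => (Fin.tail a i, 1))
    have h1 : sdAct (1:K) (((a 0, 1)) : A × K) = 1 := by simp [sdAct]
    rw [h1]
    rfl
  · refine Finset.prod_congr rfl fun i _ => ?_
    congr 1
    show f 1 (Fin.contractNth i (sdMul F) fun l => ((a l, 1) : A × K))
      = f 1 (fun l => (Fin.contractNth i (· * ·) a l, 1))
    congr 1
    funext l
    unfold Fin.contractNth
    split_ifs <;> simp [sdMul, (hFn 1).1]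

end Lemmas3
end St5
namespace St5
section Homotopy
variable {A K : Type*} [CommGroup A] [Group K] [MulDistribMulAction K A]

theorem del_pr_lt (i k : ℕ) (hk : k < i) (w : ℕ → A × K) :
    del k (pr i w) = pr (i-1) (del k w) := by
  funext j
  simp only [del, pr]
  split_ifs <;>
    first
      | rfl
      | omega
      | (congr 1 <;> first | rfl | omega | (congr 1 <;> omega))

theorem del_pr_gt (i k : ℕ) (hk : i + 2 ≤ k) (w : ℕ → A × K) :
    del k (pr i w) = pr i (del (k-1) w) := by
  funext j
  simp only [del, pr]
  split_ifs <;>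
    first
      | rfl
      | omega
      | (congr 1 <;> first | rfl | omega | (congr 1 <;> omega))

theorem del_pr_diag (i : ℕ) (w : ℕ → A × K) :
    del (i+1) (pr i w) = del (i+1) (pr (i+1) w) := by
  funext j
  simp only [del, pr]
  split_ifs <;>
    first
      | rfl
      | omega
      | (congr 1 <;> first | rfl | omega | (congr 1 <;> omega))

theorem del_pr_zero (w : ℕ → A × K) : del 0 (pr 0 w) = w := by
  funext j
  simp only [del, pr]
  split_ifs <;>
    first
      | rfl
      | omega
      | (congr 1 <;> first | rfl | omega | (congr 1 <;> omega))

theorem del_pr_last (m : ℕ) (w : ℕ → A × K) : del (m+1) (pr m w) = uptil m w := by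
  funext j
  simp only [del, pr, uptil]
  split_ifs <;>
    first
      | rfl
      | omega
      | (congr 1 <;> first | rfl | omega | (congr 1 <;> omega))

/-- `T θ w (i,k) = θ(∂_k (pr_i w))^{(-1)^{i+k}}` -/
def Tt (θ : (ℕ → A × K) → ℂˣ) (w : ℕ → A × K) : ℕ × ℕ → ℂˣ :=
  fun p => θ (del p.2 (pr p.1 w)) ^ ((-1:ℤ)^(p.1+p.2))

/-- `T1 θ w (k,i) = θ(pr_i (∂_k w))^{(-1)^{k+i}}` -/
def Tt1 (θ : (ℕ → A × K) → ℂˣ) (w : ℕ → A × K) : ℕ × ℕ → ℂˣ :=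
  fun p => θ (pr p.2 (del p.1 w)) ^ ((-1:ℤ)^(p.1+p.2))

theorem cancel_pair (x : ℂˣ) (s : ℕ) : x ^ ((-1:ℤ)^s) * x ^ ((-1:ℤ)^(s+1)) = 1 := by
  rw [pow_succ, mul_neg_one, zpow_neg, mul_inv_cancel]

set_option maxHeartbeats 1000000 in
theorem homotopy (m : ℕ) (θ : (ℕ → A × K) → ℂˣ) (w : ℕ → A × K) :
    hdel m (HH m θ) w * HH (m+1) (hdel (m+1) θ) w = θ w * (θ (uptil m w))⁻¹ := by
  classical
  have hS1 : hdel m (HH m θ) w = ∏ p ∈ Finset.range (m+1) ×ˢ Finset.range m, Tt1 θ w p := by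
    rw [Finset.prod_product]
    unfold hdel HH
    refine Finset.prod_congr rfl fun k _ => ?_
    rw [← Finset.prod_zpow]
    refine Finset.prod_congr rfl fun i _ => ?_
    unfold Tt1
    rw [← zpow_mul]
    congr 1
    rw [← pow_add, Nat.add_comm]
  have hS2 : HH (m+1) (hdel (m+1) θ) w
      = ∏ p ∈ Finset.range (m+1) ×ˢ Finset.range (m+2), Tt θ w p := by
    rw [Finset.prod_product]
    unfold hdel HH
    refine Finset.prod_congr rfl fun i _ => ?_
    rw [← Finset.prod_zpow]
    refine Finset.prod_congr rfl fun k _ => ?_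
    unfold Tt
    rw [← zpow_mul]
    congr 1
    rw [← pow_add, Nat.add_comm]
  set P2 := Finset.range (m+1) ×ˢ Finset.range (m+2) with hP2
  have hsplit : ∏ p ∈ P2, Tt θ w p
      = (∏ p ∈ P2.filter (fun p => p.2 = p.1 ∨ p.2 = p.1 + 1), Tt θ w p) *
        ∏ p ∈ P2.filter (fun p => ¬(p.2 = p.1 ∨ p.2 = p.1 + 1)), Tt θ w p :=
    (Finset.prod_filter_mul_prod_filter_not P2 _ _).symm
  -- off-band part cancels against S1
  have hoff : ∏ p ∈ P2.filter (fun p => ¬(p.2 = p.1 ∨ p.2 = p.1 + 1)), Tt θ w p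
      = (∏ p ∈ Finset.range (m+1) ×ˢ Finset.range m, Tt1 θ w p)⁻¹ := by
    rw [← Finset.prod_inv_distrib]
    refine Finset.prod_nbij' (fun p => if p.2 < p.1 then (p.2, p.1 - 1) else (p.2 - 1, p.1))
      (fun p => if p.1 ≤ p.2 then (p.2 + 1, p.1) else (p.2, p.1 + 1)) ?_ ?_ ?_ ?_ ?_
    · intro p hp
      simp only [Finset.mem_filter, Finset.mem_product, Finset.mem_range, hP2] at hp
      split_ifs <;>
        (simp only [Finset.mem_product, Finset.mem_range]; constructor <;> omega)
    · intro p hp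
      simp only [Finset.mem_product, Finset.mem_range] at hp
      split_ifs <;>
        (simp only [Finset.mem_filter, Finset.mem_product, Finset.mem_range, hP2]
         try dsimp only
         omega)
    · intro p hp
      simp only [Finset.mem_filter, Finset.mem_product, Finset.mem_range, hP2] at hp
      split_ifs <;> (simp_all [Prod.ext_iff]; try omega)
    · intro p hp
      simp only [Finset.mem_product, Finset.mem_range] at hp
      split_ifs <;> (simp_all [Prod.ext_iff]; try omega)
    · intro p hp
      simp only [Finset.mem_filter, Finset.mem_product, Finset.mem_range, hP2] at hp
      obtain ⟨⟨h1, h2⟩, h3⟩ := hp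
      by_cases hc : p.2 < p.1
      · rw [if_pos hc]
        unfold Tt Tt1
        dsimp only
        rw [del_pr_lt p.1 p.2 hc w, ← zpow_neg]
        congr 1
        have he : p.1 + p.2 = (p.2 + (p.1 - 1)) + 1 := by omega
        rw [he, pow_succ, mul_neg_one]
      · rw [if_neg hc]
        unfold Tt Tt1
        dsimp only
        have hge : p.1 + 2 ≤ p.2 := by omega
        rw [del_pr_gt p.1 p.2 hge w, ← zpow_neg]
        congr 1
        have he : p.1 + p.2 = ((p.2 - 1) + p.1) + 1 := by omega
        rw [he, pow_succ, mul_neg_one]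
  -- band part
  have h00mem : ((0:ℕ), (0:ℕ)) ∈ P2.filter (fun p => p.2 = p.1 ∨ p.2 = p.1 + 1) := by
    simp [hP2]
  have hmmem : ((m:ℕ), m+1) ∈
      (P2.filter (fun p => p.2 = p.1 ∨ p.2 = p.1 + 1)).erase (0,0) := by
    simp [hP2]
  have hband : ∏ p ∈ P2.filter (fun p => p.2 = p.1 ∨ p.2 = p.1 + 1), Tt θ w p
      = Tt θ w (0,0) * (Tt θ w (m, m+1) * ∏ p ∈
        (((P2.filter (fun p => p.2 = p.1 ∨ p.2 = p.1 + 1)).erase (0,0)).erase (m, m+1)),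
          Tt θ w p) := by
    rw [Finset.mul_prod_erase _ _ hmmem, Finset.mul_prod_erase _ _ h00mem]
  have hPa : ∏ p ∈
      (((P2.filter (fun p => p.2 = p.1 ∨ p.2 = p.1 + 1)).erase (0,0)).erase (m, m+1)),
        Tt θ w p = 1 := by
    refine Finset.prod_involution
      (fun p _ => if p.2 = p.1 + 1 then (p.1 + 1, p.2) else (p.1 - 1, p.2)) ?_ ?_ ?_ ?_
    · intro p hp
      simp only [Finset.mem_erase, Finset.mem_filter, Finset.mem_product, Finset.mem_range,
        hP2, ne_eq, Prod.ext_iff] at hp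
      obtain ⟨hne1, hne2, ⟨hp1, hp2⟩, hband'⟩ := hp
      by_cases hc : p.2 = p.1 + 1
      · rw [if_pos hc]
        unfold Tt
        dsimp only
        have hbase : del p.2 (pr (p.1 + 1) w) = del p.2 (pr p.1 w) := by
          rw [hc]; exact (del_pr_diag p.1 w).symm
        rw [hbase]
        have he : (p.1 + 1) + p.2 = (p.1 + p.2) + 1 := by omega
        rw [he]
        exact cancel_pair _ _
      · rw [if_neg hc]
        have hpp : p.2 = p.1 := by tauto
        have hp1pos : 1 ≤ p.1 := by
          rcases Nat.eq_zero_or_pos p.1 with h | h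
          · exfalso; exact hne2 ⟨h, by omega⟩
          · exact h
        obtain ⟨r, hr⟩ : ∃ r, p.1 = r + 1 := ⟨p.1 - 1, by omega⟩
        unfold Tt
        dsimp only
        rw [hpp, hr]
        have h4 : r + 1 - 1 = r := by omega
        rw [h4]
        rw [show del (r+1) (pr r w) = del (r+1) (pr (r+1) w) from del_pr_diag r w]
        have he : r + 1 + (r + 1) = (r + (r + 1)) + 1 := by omega
        rw [he, mul_comm]
        exact cancel_pair _ _
    · intro p hp _
      simp only [Finset.mem_erase, Finset.mem_filter, Finset.mem_product, Finset.mem_range,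
        hP2, ne_eq, Prod.ext_iff] at hp
      obtain ⟨hne1, hne2, ⟨hp1, hp2⟩, hband'⟩ := hp
      split_ifs <;> (intro hcon; have hfst := congrArg Prod.fst hcon; dsimp at hfst; omega)
    · intro p hp
      simp only [Finset.mem_erase, Finset.mem_filter, Finset.mem_product, Finset.mem_range,
        hP2, ne_eq, Prod.ext_iff] at hp
      obtain ⟨hne1, hne2, ⟨hp1, hp2⟩, hband'⟩ := hp
      by_cases hc : p.2 = p.1 + 1
      · rw [if_pos hc]
        have hp1m : p.1 < m := by
          rcases Nat.lt_or_ge p.1 m with h | h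
          · exact h
          · exfalso; exact hne1 ⟨by omega, by omega⟩
        simp only [Finset.mem_erase, Finset.mem_filter, Finset.mem_product, Finset.mem_range,
          hP2, ne_eq, Prod.ext_iff]
        try dsimp only
        omega
      · rw [if_neg hc]
        have hpp : p.2 = p.1 := by tauto
        have hp1pos : 1 ≤ p.1 := by
          rcases Nat.eq_zero_or_pos p.1 with h | h
          · exfalso; exact hne2 ⟨h, by omega⟩
          · exact h
        simp only [Finset.mem_erase, Finset.mem_filter, Finset.mem_product, Finset.mem_range,
          hP2, ne_eq, Prod.ext_iff]
        try dsimp only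
        omega
    · intro p hp
      simp only [Finset.mem_erase, Finset.mem_filter, Finset.mem_product, Finset.mem_range,
        hP2, ne_eq, Prod.ext_iff] at hp
      obtain ⟨hne1, hne2, ⟨hp1, hp2⟩, hband'⟩ := hp
      by_cases hc : p.2 = p.1 + 1
      · rw [if_pos hc]
        dsimp only
        rw [if_neg (by omega : ¬ p.2 = (p.1 + 1) + 1)]
        simp
      · rw [if_neg hc]
        have hpp : p.2 = p.1 := by tauto
        have hp1pos : 1 ≤ p.1 := by
          rcases Nat.eq_zero_or_pos p.1 with h | h
          · exfalso; exact hne2 ⟨h, by omega⟩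
          · exact h
        dsimp only
        rw [if_pos (by omega : p.2 = (p.1 - 1) + 1)]
        rw [Prod.ext_iff]
        dsimp only
        constructor <;> omega
  have hT00 : Tt θ w (0,0) = θ w := by
    unfold Tt
    dsimp only
    rw [del_pr_zero w]
    simp
  have hTm : Tt θ w (m, m+1) = (θ (uptil m w))⁻¹ := by
    unfold Tt
    dsimp only
    rw [del_pr_last m w, Odd.neg_one_pow ⟨m, by omega⟩, zpow_neg_one]
  rw [hS1, hS2, hsplit, hoff, hband, hPa, hT00, hTm, mul_one]
  generalize (∏ p ∈ Finset.range (m+1) ×ˢ Finset.range m, Tt1 θ w p) = S1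
  rw [mul_comm S1 _, mul_assoc, mul_assoc, inv_mul_cancel, mul_one]

end Homotopy
end St5
namespace St5
section Swap
variable {A K : Type*} [CommGroup A] [Group K] [MulDistribMulAction K A]

theorem del_uptil (m k : ℕ) (hk : k ≤ m+1) (w : ℕ → A × K) :
    del k (uptil (m+1) w) = uptil m (del k w) := by
  funext j
  simp only [del, pr, uptil]
  split_ifs <;>
    first
      | rfl
      | omega
      | (congr 1 <;> first | rfl | omega | (congr 1 <;> omega))

end Swap

section Final
variable {A K : Type*} [CommGroup A] [Group K] [MulDistribMulAction K A]
variable (F : K → K → A)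
variable (hFn : ∀ k : K, F 1 k = 1 ∧ F k 1 = 1)
variable (hF : ∀ k₁ k₂ k₃ : K, k₁ • F k₂ k₃ * F k₁ (k₂ * k₃) = F (k₁ * k₂) k₃ * F k₁ k₂)
include hFn hF
set_option linter.unusedSectionVars false

theorem phi_delta (q : ℕ) (α : CqA A q) : deltaG F (phiA F α) = phiA F (deltaA α) := by
  have hθ : AInv F (toHom F q (phiA F α)) := AInv_toHom F hFn hF q _
  have hD : Dep (q+1) (toHom F q (phiA F α)) := Dep_toHom F hFn hF q _
  have h1 : toInhom F q (fun w => toHom F q (phiA F α) (uptil q w)) = phiA F α := by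
    rw [lemL F hFn hF q _ hD, hom_inhom F hFn hF q, psi_phi F hFn hF q]
  have hAu : AInv F (fun w => toHom F q (phiA F α) (uptil q w)) :=
    AInv_uptil F hFn hF q _ hθ
  have hDu : Dep (q+1) (fun w => toHom F q (phiA F α) (uptil q w)) := by
    intro w w' h
    apply hD
    intro j hj
    unfold uptil
    split_ifs
    · rw [h j hj]
    · rw [h j hj]
  have h2 : deltaG F (phiA F α)
      = toInhom F (q+1) (hdel (q+1) (fun w => toHom F q (phiA F α) (uptil q w))) := by
    conv_lhs => rw [← h1]
    exact inhom_delta F hFn hF q _ hAu hDu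
  have hswap : hdel (q+1) (fun w => toHom F q (phiA F α) (uptil q w))
      = fun w => hdel (q+1) (toHom F q (phiA F α)) (uptil (q+1) w) := by
    funext w
    unfold hdel
    refine Finset.prod_congr rfl fun k hk => ?_
    have hk' : k ≤ q + 1 := by have := Finset.mem_range.mp hk; omega
    rw [del_uptil q k hk' w]
  have h3 : toInhom F (q+1) (fun w => hdel (q+1) (toHom F q (phiA F α)) (uptil (q+1) w))
      = phiA F (psiA (toInhom F (q+1) (hdel (q+1) (toHom F q (phiA F α))))) :=
    lemL F hFn hF (q+1) _ (Dep_hdel F hFn hF (q+1) (q+1) _ hD)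
  have h4 : toInhom F (q+1) (hdel (q+1) (toHom F q (phiA F α))) = deltaG F (phiA F α) := by
    rw [← inhom_delta F hFn hF q _ hθ hD, hom_inhom F hFn hF q]
  rw [h2, hswap, h3, h4, psi_delta F hFn hF q, psi_phi F hFn hF q]

theorem deltaG_mul (n : ℕ) (h₁ h₂ : Cq A K n) :
    deltaG F (h₁ * h₂) = deltaG F h₁ * deltaG F h₂ := by
  funext x g
  show deltaG F (h₁ * h₂) x g = deltaG F h₁ x g * deltaG F h₂ x g
  unfold deltaG
  simp only [Pi.mul_apply, mul_zpow, Finset.prod_mul_distrib]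
  exact mul_mul_mul_comm _ _ _ _

theorem normG_phiA (q : ℕ) (α : CqA A q) (hα : NormA α) : NormG (phiA F α) := by
  rintro x g ⟨i, hi⟩
  apply hα
  refine ⟨i, ?_⟩
  rw [hi]
  unfold kap
  simp [(hFn _).2]

theorem normG_h0 (q : ℕ) (f : Cq A K (q+1)) (hf : NormG f) :
    NormG (toInhom F q (HH (q+1) (toHom F (q+1) f))) := by
  rintro x g ⟨i, hi⟩
  show HH (q+1) (toHom F (q+1) f) (ppN F x (ext g)) = 1
  have hpp : ppN F x (ext g) ((i:ℕ)+1) = ppN F x (ext g) (i:ℕ) := by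
    show sdMul F (ppN F x (ext g) (i:ℕ)) (ext g (i:ℕ)) = _
    rw [ext_lt F hFn hF g i.isLt, Fin.eta, hi]
    exact mul_one' F hFn hF _
  unfold HH
  apply Finset.prod_eq_one
  intro j hj
  have hji := i.isLt
  have hone : toHom F (q+1) f (pr j (ppN F x (ext g))) = 1 := by
    unfold toHom
    apply hf
    rcases le_or_gt ((i:ℕ)+1) j with hle | hlt
    · refine ⟨⟨(i:ℕ), by omega⟩, ?_⟩
      have e1 : pr j (ppN F x (ext g)) (i:ℕ) = uG (ppN F x (ext g) (i:ℕ)) := by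
        unfold pr; rw [if_pos (by omega)]
      have e2 : pr j (ppN F x (ext g)) ((i:ℕ)+1) = uG (ppN F x (ext g) ((i:ℕ)+1)) := by
        unfold pr; rw [if_pos (by omega)]
      show sdMul F (invG F (pr j (ppN F x (ext g)) (i:ℕ)))
        (pr j (ppN F x (ext g)) ((i:ℕ)+1)) = ((1:A),(1:K))
      rw [e1, e2, hpp]
      exact invG_mul F hFn hF _
    · refine ⟨⟨(i:ℕ)+1, by omega⟩, ?_⟩
      have e1 : pr j (ppN F x (ext g)) ((i:ℕ)+1) = ppN F x (ext g) (i:ℕ) := by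
        unfold pr; rw [if_neg (by omega)]; congr 1
      have e2 : pr j (ppN F x (ext g)) ((i:ℕ)+2) = ppN F x (ext g) ((i:ℕ)+1) := by
        unfold pr; rw [if_neg (by omega)]; congr 1
      show sdMul F (invG F (pr j (ppN F x (ext g)) ((i:ℕ)+1)))
        (pr j (ppN F x (ext g)) ((i:ℕ)+1+1)) = ((1:A),(1:K))
      rw [e1]
      rw [show (i:ℕ)+1+1 = (i:ℕ)+2 from rfl, e2, hpp]
      exact invG_mul F hFn hF _
  rw [hone, one_zpow]

theorem main5 (q : ℕ) (f : Cq A K (q + 1)) (hf : NormG f) (hcoc : deltaG F f = 1)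
    (c : CqA A q) (hc : NormA c) (hpsi : psiA f = deltaA c) :
    ∃ h : Cq A K q, NormG h ∧ f = deltaG F h := by
  classical
  have hAI : AInv F (toHom F (q+1) f) := AInv_toHom F hFn hF _ f
  have hDep : Dep (q+2) (toHom F (q+1) f) := Dep_toHom F hFn hF _ f
  have hfθ : toInhom F (q+1) (toHom F (q+1) f) = f := hom_inhom F hFn hF _ f
  have hz : hdel (q+2) (toHom F (q+1) f) = fun _ => 1 := by
    apply vanish F hFn hF (q+2) _ (AInv_hdel F hFn hF _ _ hAI)
      (Dep_hdel F hFn hF (q+2) (q+2) _ hDep)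
    rw [← inhom_delta F hFn hF (q+1) _ hAI hDep, hfθ, hcoc]
  have hHz : HH (q+2) (hdel (q+2) (toHom F (q+1) f)) = fun _ => 1 := by
    rw [hz]; exact HH_one F hFn hF _
  have hkey : ∀ w, hdel (q+1) (HH (q+1) (toHom F (q+1) f)) w
      = toHom F (q+1) f w * (toHom F (q+1) f (uptil (q+1) w))⁻¹ := by
    intro w
    have hh := homotopy (q+1) (toHom F (q+1) f) w
    rw [hHz] at hh
    simpa using hh
  have h5 : deltaG F (toInhom F q (HH (q+1) (toHom F (q+1) f)))
      = toInhom F (q+1) (hdel (q+1) (HH (q+1) (toHom F (q+1) f))) :=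
    inhom_delta F hFn hF q _ (AInv_HH F hFn hF _ _ hAI)
      (Dep_HH F hFn hF (q+1) (q+1) _ hDep (le_refl _))
  have hLL := lemL F hFn hF (q+1) (toHom F (q+1) f) hDep
  rw [hfθ] at hLL
  have h6 : toInhom F (q+1) (hdel (q+1) (HH (q+1) (toHom F (q+1) f)))
      = fun x g => f x g * (phiA F (psiA f) x g)⁻¹ := by
    funext x g
    show hdel (q+1) (HH (q+1) (toHom F (q+1) f)) (ppN F x (ext g)) = _
    rw [hkey]
    congr 1
    · exact congrFun (congrFun hfθ x) g
    · exact congrArg (fun u => u⁻¹) (congrFun (congrFun hLL x) g)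
  refine ⟨toInhom F q (HH (q+1) (toHom F (q+1) f)) * phiA F c, ?_, ?_⟩
  · rintro x g ⟨i, hi⟩
    have h1 := normG_h0 F hFn hF q f hf x g ⟨i, hi⟩
    have h2 := normG_phiA F hFn hF q c hc x g ⟨i, hi⟩
    show toInhom F q (HH (q+1) (toHom F (q+1) f)) x g * phiA F c x g = 1
    rw [h1, h2, mul_one]
  · rw [deltaG_mul F hFn hF, h5, h6]
    funext x g
    show f x g = (f x g * (phiA F (psiA f) x g)⁻¹) * deltaG F (phiA F c) x g
    rw [phi_delta F hFn hF q c, ← hpsi, mul_assoc, inv_mul_cancel, mul_one]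

end Final
end St5


/-- Let `q ≥ 1` (written here as `q+1`) and let
`f ∈ C^{q+1}(G,Map(K,ℂˣ))` with `δ_G f = 1`.  If there exists `c ∈ C^q(A,ℂˣ)` with
`ψ(f) = δ_A c`, then there exists `h ∈ C^q(G,Map(K,ℂˣ))` with `f = δ_G h`. -/
theorem statement5 {A K : Type*} [CommGroup A] [Group K] [Finite A] [Finite K]
    [MulDistribMulAction K A]
    (F : K → K → A)
    (hFn : ∀ k : K, F 1 k = 1 ∧ F k 1 = 1)
    (hF : ∀ k₁ k₂ k₃ : K, k₁ • F k₂ k₃ * F k₁ (k₂ * k₃) = F (k₁ * k₂) k₃ * F k₁ k₂)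
    (q : ℕ) (f : Cq A K (q + 1)) (hf : NormG f) (hcoc : deltaG F f = 1)
    (c : CqA A q) (hc : NormA c) (hpsi : psiA f = deltaA c) :
    ∃ h : Cq A K q, NormG h ∧ f = deltaG F h := by
  exact St5.main5 F hFn hF q f hf hcoc c hc hpsi
end

section
/- Let μ ∈ C²(G,Map(K,ℂˣ)) and let γ : K → C¹(G,Map(K,ℂˣ)) be normalized (γ(1) = 1) and satisfy, for all y,x ∈ K and g₁,g₂ ∈ G, δ_G(γ(y))(x;g₁,g₂) = μ(yx;g₁,g₂)·μ(x;g₁,g₂)⁻¹. Define ν̃(y₁,y₂) := γ(y₂)·(γ(y₁)◁y₂)·γ(y₁y₂)⁻¹ ∈ C¹(G,Map(K,ℂˣ)) and ν(y₁,y₂)(a) := ν̃(y₁,y₂)(1;(a,1)) for a ∈ A. Then: (i) δ_G(ν̃(y₁,y₂)) = 1 for all y₁,y₂ ∈ K; (ii) for all y₁,y₂ ∈ K the map a ↦ ν(y₁,y₂)(a) is a group homomorphism A → ℂˣ, i.e. ν(y₁,y₂) ∈ 𝔸; and (iii) ν is a normalized 2-cocycle of K with values in 𝔸: ν(1,k)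 = ν(k,1) = 1 and ν(k₂,k₃)·ν(k₁,k₂k₃) = ν(k₁k₂,k₃)·ν(k₁,k₂)^{k₃} for all k₁,k₂,k₃ ∈ K. -/
open scoped BigOperators

/-- `ν̃(y₁,y₂) := γ(y₂)·(γ(y₁)◁y₂)·γ(y₁y₂)⁻¹ ∈ C¹(G,Map(K,ℂˣ))`. -/
def nuT {A K : Type*} [Group K] (γ : K → Cq A K 1) (y₁ y₂ : K) : Cq A K 1 :=
  γ y₂ * rAct (γ y₁) y₂ * (γ (y₁ * y₂))⁻¹

/-- `ν(y₁,y₂)(a) := ν̃(y₁,y₂)(1;(a,1))`. -/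
def nuC {A K : Type*} [Group K] (γ : K → Cq A K 1) (y₁ y₂ : K) (a : A) : ℂˣ :=
  nuT γ y₁ y₂ 1 fun _ => (a, (1 : K))


section Aux
variable {A K : Type*} [CommGroup A] [Group K] [MulDistribMulAction K A]

lemma nuT_apply' (γ : K → Cq A K 1) (y₁ y₂ x : K) (g : Fin 1 → A × K) :
    nuT γ y₁ y₂ x g = γ y₂ x g * γ y₁ (y₂ * x) g * (γ (y₁ * y₂) x g)⁻¹ := rfl

lemma deltaG_mul' (F : K → K → A) {q : ℕ} (f h : Cq A K q) :
    deltaG F (f * h) = deltaG F f * deltaG F h := by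
  funext x g
  simp only [deltaG, Pi.mul_apply, mul_zpow, Finset.prod_mul_distrib]
  exact mul_mul_mul_comm _ _ _ _

lemma deltaG_inv' (F : K → K → A) {q : ℕ} (f : Cq A K q) :
    deltaG F f⁻¹ = (deltaG F f)⁻¹ := by
  funext x g
  simp only [deltaG, Pi.inv_apply, inv_zpow, Finset.prod_inv_distrib, Pi.mul_apply, mul_inv]

lemma deltaG_rAct' (F : K → K → A) {q : ℕ} (f : Cq A K q) (k : K) :
    deltaG F (rAct f k) = rAct (deltaG F f) k := by
  funext x g
  simp only [deltaG, rAct, sdAct, mul_assoc]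

lemma deltaG1_apply' (F : K → K → A) (f : Cq A K 1) (x : K) (g : Fin 2 → A × K) :
    deltaG F f x g =
      f (x * (g 0).2) (fun _ => g 1) * (f x (fun _ => sdMul F (g 0) (g 1)))⁻¹ *
        f x (fun _ => g 0) := by
  have h0 : Fin.contractNth (0 : Fin 2) (sdMul F) g = fun _ => sdMul F (g 0) (g 1) := by
    funext i
    have hi : i = 0 := Subsingleton.elim _ _
    subst hi
    simp [Fin.contractNth]
  have h1 : Fin.contractNth (1 : Fin 2) (sdMul F) g = fun _ => g 0 := by
    funext i
    have hi : i = 0 := Subsingleton.elim _ _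
    subst hi
    simp [Fin.contractNth]
  have ht : Fin.tail g = fun _ : Fin 1 => g 1 := by
    funext i
    have hi : i = 0 := Subsingleton.elim _ _
    subst hi
    rfl
  simp only [deltaG, h0, h1, ht, sdAct]
  rw [Fin.prod_univ_two, h0, h1]
  norm_num [mul_assoc]

end Aux

/-- With `δ_G(γ(y)) = (μ◁y)/μ`:
(i) each `ν̃(y₁,y₂)` is a `δ_G`-cocycle; (ii) each `ν(y₁,y₂)` is a character of `A`;
(iii) `ν` is a normalized 2-cocycle of `K` with values in `𝔸`. -/
theorem statement6 {A K : Type*} [CommGroup A] [Group K] [Finite A] [Finite K]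
    [MulDistribMulAction K A]
    (F : K → K → A)
    (hFn : ∀ k : K, F 1 k = 1 ∧ F k 1 = 1)
    (hF : ∀ k₁ k₂ k₃ : K, k₁ • F k₂ k₃ * F k₁ (k₂ * k₃) = F (k₁ * k₂) k₃ * F k₁ k₂)
    (μ : Cq A K 2) (hμ : NormG μ)
    (γ : K → Cq A K 1) (hγn : ∀ y, NormG (γ y)) (hγ1 : γ 1 = 1)
    (hγ : ∀ (y x : K) (g : Fin 2 → A × K),
      deltaG F (γ y) x g = μ (y * x) g * (μ x g)⁻¹) :
    (∀ y₁ y₂ : K, deltaG F (nuT γ y₁ y₂) = 1) ∧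
    (∀ (y₁ y₂ : K) (a b : A),
      nuC γ y₁ y₂ (a * b) = nuC γ y₁ y₂ a * nuC γ y₁ y₂ b) ∧
    (∀ (k : K) (a : A), nuC γ 1 k a = 1 ∧ nuC γ k 1 a = 1) ∧
    (∀ (k₁ k₂ k₃ : K) (a : A),
      nuC γ k₂ k₃ a * nuC γ k₁ (k₂ * k₃) a =
        nuC γ (k₁ * k₂) k₃ a * nuC γ k₁ k₂ (k₃ • a)) := by
  -- Part (i)
  have key1 : ∀ y₁ y₂ : K, deltaG F (nuT γ y₁ y₂) = 1 := by
    intro y₁ y₂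
    have h : deltaG F (nuT γ y₁ y₂) =
        deltaG F (γ y₂) * rAct (deltaG F (γ y₁)) y₂ * (deltaG F (γ (y₁ * y₂)))⁻¹ := by
      rw [nuT, deltaG_mul', deltaG_mul', deltaG_inv', deltaG_rAct']
    funext x g
    rw [h]
    show deltaG F (γ y₂) x g * deltaG F (γ y₁) (y₂ * x) g *
        (deltaG F (γ (y₁ * y₂)) x g)⁻¹ = 1
    rw [hγ, hγ, hγ, ← mul_assoc y₁ y₂ x]
    rw [Units.ext_iff]
    push_cast [Units.val_inv_eq_inv_val]
    field_simp
  -- pointwise version of Part (i)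
  have key1' : ∀ (y₁ y₂ x : K) (g : Fin 2 → A × K),
      nuT γ y₁ y₂ (x * (g 0).2) (fun _ => g 1) *
        (nuT γ y₁ y₂ x (fun _ => sdMul F (g 0) (g 1)))⁻¹ *
        nuT γ y₁ y₂ x (fun _ => g 0) = 1 := by
    intro y₁ y₂ x g
    rw [← deltaG1_apply', key1]
    rfl
  -- shift lemma
  have shift : ∀ (y₁ y₂ k : K) (a : A),
      nuT γ y₁ y₂ k (fun _ => (a, (1 : K))) = nuT γ y₁ y₂ 1 (fun _ => (k • a, (1 : K))) := by
    intro y₁ y₂ k a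
    have h1 := key1' y₁ y₂ 1 ![((1 : A), k), (a, (1 : K))]
    have h2 := key1' y₁ y₂ 1 ![(k • a, (1 : K)), ((1 : A), k)]
    simp only [Matrix.cons_val_zero, Matrix.cons_val_one, Matrix.head_cons, sdMul,
      one_mul, mul_one, smul_one, (hFn k).1, (hFn k).2, one_smul] at h1 h2
    rw [Units.ext_iff] at h1 h2 ⊢
    push_cast [Units.val_inv_eq_inv_val] at h1 h2 ⊢
    field_simp at h1 h2
    refine mul_right_cancel₀ ((nuT γ y₁ y₂ 1 fun _ => ((1 : A), k)).ne_zero) ?_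
    linear_combination h1 - h2
  refine ⟨key1, ?_, ?_, ?_⟩
  · -- Part (ii)
    intro y₁ y₂ a b
    have h := key1' y₁ y₂ 1 ![(a, (1 : K)), (b, (1 : K))]
    simp only [Matrix.cons_val_zero, Matrix.cons_val_one, Matrix.head_cons, sdMul,
      one_mul, mul_one, (hFn 1).1, one_smul] at h
    simp only [nuC]
    rw [Units.ext_iff] at h ⊢
    push_cast [Units.val_inv_eq_inv_val] at h ⊢
    field_simp at h
    linear_combination -h
  · -- normalization
    intro k a
    constructor
    · simp [nuC, nuT, rAct, hγ1, Pi.mul_apply, Pi.inv_apply, Pi.one_apply, one_mul]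
    · simp [nuC, nuT, rAct, hγ1, Pi.mul_apply, Pi.inv_apply, Pi.one_apply, one_mul, mul_one]
  · -- cocycle identity
    intro k₁ k₂ k₃ a
    have hs := shift k₁ k₂ k₃ a
    simp only [nuC, ← hs, nuT_apply', mul_one, one_mul, ← mul_assoc]
    rw [Units.ext_iff]
    push_cast [Units.val_inv_eq_inv_val]
    rw [mul_assoc k₁ k₂ k₃]
    field_simp
end

section
/- Let F̂ : K × K → 𝔸 be a normalized 2-cocycle. Define u(k₁,k₂,k₃) ∈ Map(K,ℂˣ) by u(k₁,k₂,k₃)(x) := F̂(k₁,k₂)(F(k₃,x)), and φ∘F̂ ∈ C²(K, C¹(G,Map(K,ℂˣ))) by (φ∘F̂)(k₁,k₂)(x;g) := F̂(k₁,k₂)(κ_{x,g}). Then for all k₁,k₂,k₃,k₄,x,x₁,x₂ ∈ K and a₂ ∈ A: (i) δ_K(φ∘F̂)(k₁,k₂,k₃)(x₁;(a₂,x₂)) = F̂(k₁,k₂)(F(k₃,x₁)·F(k₃,x₁x₂)⁻¹); (ii) δ_G(u(k₁,k₂,k₃))(x₁;(a₂,x₂)) = F̂(k₁,k₂)(F(k₃,x₁x₂)·F(k₃,x₁)⁻¹),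 so that δ_K(φ∘F̂) · (δ_G ∘ u) = 1; and (iii) (δ_K u)(k₁,k₂,k₃,k₄)(x) = F̂(k₁,k₂)(F(k₃,k₄)), independent of x. (This computes the second differential d₂ : E₂^{2,1} → E₂^{4,0} of the Lyndon–Hochschild–Serre spectral sequence as [F̂] ↦ [(F̂ ∧ F)⁻¹], where (F̂ ∧ F)(k₁,k₂,k₃,k₄) := F̂(k₁,k₂)(F(k₃,k₄)).) -/
/-!
Both computations reduce to the two cocycle identities. In each `δ_K`, the dual cocycle condition
for `F̂` collapses the three terms that vary in the `K`-slots into `F̂(k₁,k₂)(k₃ • ·)`; the twisted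
cocycle identity for `F` then rewrites `k₃ • κ_{x,g}` and `k₃ • F(k₄,x)`, leaving only the
values of `F` displayed in the conclusion.
-/

open scoped BigOperators

/-- `φ∘F̂ ∈ C²(K, C¹(G,Map(K,ℂˣ)))`, `(φ∘F̂)(k₁,k₂)(x;g) = F̂(k₁,k₂)(κ_{x,g})`. -/
def phiF2 {A K : Type*} [CommGroup A] [Group K] [MulDistribMulAction K A]
    (F : K → K → A) (Fh : K → K → A →* ℂˣ) : Cpq A K 2 1 :=
  fun k x g => Fh (k 0) (k 1) (kap F x (g 0))

/-- `u ∈ C³(K, C⁰(G,Map(K,ℂˣ)))`, `u(k₁,k₂,k₃)(x) = F̂(k₁,k₂)(F(k₃,x))`. -/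
def uC3 {A K : Type*} [CommGroup A] (F : K → K → A) (Fh : K → K → A →* ℂˣ) : Cpq A K 3 0 :=
  fun k x _ => Fh (k 0) (k 1) (F (k 2) x)

section Unfolding

variable {A K : Type*} [Group K]

theorem deltaK_two_apply {q : ℕ} (h : Cpq A K 2 q) (k : Fin 3 → K) (x : K)
    (g : Fin q → A × K) :
    deltaK h k x g = h ![k 1, k 2] x g * (h ![k 0 * k 1, k 2] x g)⁻¹ *
      h ![k 0, k 1 * k 2] x g * (h ![k 0, k 1] (k 2 * x) g)⁻¹ := by
  have h₁ : Fin.tail k = ![k 1, k 2] := by ext i; fin_cases i <;> rfl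
  have h₂ : (0 : Fin 2).castSucc.contractNth (· * ·) k = ![k 0 * k 1, k 2] := by
    ext i; fin_cases i <;> rfl
  have h₃ : (1 : Fin 2).castSucc.contractNth (· * ·) k = ![k 0, k 1 * k 2] := by
    ext i; fin_cases i <;> rfl
  have h₄ : Fin.init k = ![k 0, k 1] := by ext i; fin_cases i <;> rfl
  simp only [deltaK, rAct, Fin.prod_univ_two, Pi.mul_apply, Pi.pow_apply, h₁, h₂, h₃, h₄]
  norm_num [mul_assoc]
  rfl

theorem deltaK_three_apply {q : ℕ} (h : Cpq A K 3 q) (k : Fin 4 → K) (x : K)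
    (g : Fin q → A × K) :
    deltaK h k x g = h ![k 1, k 2, k 3] x g * (h ![k 0 * k 1, k 2, k 3] x g)⁻¹ *
      h ![k 0, k 1 * k 2, k 3] x g * (h ![k 0, k 1, k 2 * k 3] x g)⁻¹ *
      h ![k 0, k 1, k 2] (k 3 * x) g := by
  have h₁ : Fin.tail k = ![k 1, k 2, k 3] := by ext i; fin_cases i <;> rfl
  have h₂ : (0 : Fin 3).castSucc.contractNth (· * ·) k = ![k 0 * k 1, k 2, k 3] := by
    ext i; fin_cases i <;> rfl
  have h₃ : (1 : Fin 3).castSucc.contractNth (· * ·) k = ![k 0, k 1 * k 2, k 3] := by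
    ext i; fin_cases i <;> rfl
  have h₄ : (2 : Fin 3).castSucc.contractNth (· * ·) k = ![k 0, k 1, k 2 * k 3] := by
    ext i; fin_cases i <;> rfl
  have h₅ : Fin.init k = ![k 0, k 1, k 2] := by ext i; fin_cases i <;> rfl
  simp only [deltaK, rAct, Fin.prod_univ_three, Pi.mul_apply, Pi.pow_apply, h₁, h₂, h₃, h₄, h₅]
  norm_num [mul_assoc]
  rfl

end Unfolding

section LyndonHochschildSerre

variable {A K M : Type*} [CommGroup A] [Group K] [MulDistribMulAction K A] [CommGroup M]

theorem deltaG_zero_apply (F : K → K → A) (f : Cq A K 0) (x : K) (g : Fin 1 → A × K) :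
    deltaG F f x g = f (x * (g 0).2) ![] * (f x ![])⁻¹ := by
  simp only [deltaG, sdAct, Subsingleton.elim _ (![] : Fin 0 → A × K)]
  norm_num

def IsTwistedCocycle (F : K → K → A) : Prop :=
  ∀ k₁ k₂ k₃ : K, k₁ • F k₂ k₃ * F k₁ (k₂ * k₃) = F (k₁ * k₂) k₃ * F k₁ k₂

-- The 2-cocycle condition for `K → K → Hom(A, M)`, with `K` acting on the right by `ρᵏ(a) = ρ(k • a)`.
def IsDualCocycle (Fh : K → K → A →* M) : Prop :=
  ∀ (k₁ k₂ k₃ : K) (a : A),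
    Fh k₂ k₃ a * Fh k₁ (k₂ * k₃) a = Fh (k₁ * k₂) k₃ a * Fh k₁ k₂ (k₃ • a)

theorem IsTwistedCocycle.smul_eq {F : K → K → A} (hF : IsTwistedCocycle F) (k₁ k₂ k₃ : K) :
    k₁ • F k₂ k₃ = F (k₁ * k₂) k₃ * F k₁ k₂ * (F k₁ (k₂ * k₃))⁻¹ :=
  eq_mul_inv_of_mul_eq (hF k₁ k₂ k₃)

theorem IsDualCocycle.apply_smul_eq {Fh : K → K → A →* M} (hFh : IsDualCocycle Fh)
    (k₀ k₁ k₂ : K) (a : A) :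
    Fh k₀ k₁ (k₂ • a) = Fh k₁ k₂ a * (Fh (k₀ * k₁) k₂ a)⁻¹ * Fh k₀ (k₁ * k₂) a := by
  rw [eq_comm, mul_right_comm, hFh, mul_inv_cancel_comm]

theorem IsTwistedCocycle.smul_kap {F : K → K → A} (hF : IsTwistedCocycle F)
    (k x : K) (g : A × K) :
    k • kap F x g = kap F (k * x) g * (F k x * (F k (x * g.2))⁻¹) := by
  rw [kap, kap, smul_mul', smul_smul, hF.smul_eq]
  group

variable {F : K → K → A} {Fh : K → K → A →* ℂˣ}

theorem deltaK_phiF2_apply (hF : IsTwistedCocycle F) (hFh : IsDualCocycle Fh)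
    (k : Fin 3 → K) (x : K) (g : Fin 1 → A × K) :
    deltaK (phiF2 F Fh) k x g = Fh (k 0) (k 1) (F (k 2) x * (F (k 2) (x * (g 0).2))⁻¹) := by
  rw [deltaK_two_apply]
  simp only [phiF2, Matrix.cons_val_zero, Matrix.cons_val_one]
  rw [← hFh.apply_smul_eq, hF.smul_kap, map_mul, mul_inv_cancel_comm]

theorem deltaG_uC3_apply (k : Fin 3 → K) (x : K) (g : Fin 1 → A × K) :
    deltaG F (uC3 F Fh k) x g = Fh (k 0) (k 1) (F (k 2) (x * (g 0).2) * (F (k 2) x)⁻¹) := by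
  rw [deltaG_zero_apply, map_mul, map_inv]
  rfl

theorem deltaK_phiF2_mul_deltaG_uC3 (hF : IsTwistedCocycle F) (hFh : IsDualCocycle Fh) :
    (deltaK (phiF2 F Fh) * fun k => deltaG F (uC3 F Fh k)) = 1 := by
  funext k x g
  change deltaK (phiF2 F Fh) k x g * deltaG F (uC3 F Fh k) x g = 1
  rw [deltaK_phiF2_apply hF hFh, deltaG_uC3_apply, ← map_mul, ← div_eq_mul_inv, ← div_eq_mul_inv,
    div_mul_div_cancel, div_self', map_one]

theorem deltaK_uC3_apply (hF : IsTwistedCocycle F) (hFh : IsDualCocycle Fh)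
    (k : Fin 4 → K) (x : K) (e : Fin 0 → A × K) :
    deltaK (uC3 F Fh) k x e = Fh (k 0) (k 1) (F (k 2) (k 3)) := by
  rw [deltaK_three_apply]
  simp only [uC3, Matrix.cons_val_zero, Matrix.cons_val_one, Matrix.head_cons,
    Matrix.cons_val_two, Matrix.tail_cons]
  rw [← hFh.apply_smul_eq, hF.smul_eq, ← map_inv, ← map_mul, ← map_mul]
  congr 1
  simp [mul_comm, mul_left_comm]

end LyndonHochschildSerre

theorem statement8_general {A K : Type*} [CommGroup A] [Group K]
    [MulDistribMulAction K A]
    (F : K → K → A)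
    (hF : ∀ k₁ k₂ k₃ : K, k₁ • F k₂ k₃ * F k₁ (k₂ * k₃) = F (k₁ * k₂) k₃ * F k₁ k₂)
    (Fh : K → K → A →* ℂˣ)
    (hFh : ∀ (k₁ k₂ k₃ : K) (a : A),
      Fh k₂ k₃ a * Fh k₁ (k₂ * k₃) a = Fh (k₁ * k₂) k₃ a * Fh k₁ k₂ (k₃ • a))
 :
    (∀ (k : Fin 3 → K) (x₁ x₂ : K) (a₂ : A),
      deltaK (phiF2 F Fh) k x₁ (fun _ => (a₂, x₂)) =
        Fh (k 0) (k 1) (F (k 2) x₁ * (F (k 2) (x₁ * x₂))⁻¹)) ∧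
    (∀ (k : Fin 3 → K) (x₁ x₂ : K) (a₂ : A),
      deltaG F (uC3 F Fh k) x₁ (fun _ => (a₂, x₂)) =
        Fh (k 0) (k 1) (F (k 2) (x₁ * x₂) * (F (k 2) x₁)⁻¹)) ∧
    (deltaK (phiF2 F Fh) * fun k => deltaG F (uC3 F Fh k)) = 1 ∧
    (∀ (k : Fin 4 → K) (x : K) (e : Fin 0 → A × K),
      deltaK (uC3 F Fh) k x e = Fh (k 0) (k 1) (F (k 2) (k 3))) :=
  ⟨fun k x₁ _ _ => deltaK_phiF2_apply hF hFh k x₁ _,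
    fun k x₁ _ _ => deltaG_uC3_apply k x₁ _,
    deltaK_phiF2_mul_deltaG_uC3 hF hFh,
    deltaK_uC3_apply hF hFh⟩

/-- The computation of the second differential
`d₂ : E₂^{2,1} → E₂^{4,0}` of the LHS spectral sequence: `[F̂] ↦ [(F̂ ∧ F)⁻¹]`. -/
theorem statement8 {A K : Type*} [CommGroup A] [Group K] [Finite A] [Finite K]
    [MulDistribMulAction K A]
    (F : K → K → A)
    (hFn : ∀ k : K, F 1 k = 1 ∧ F k 1 = 1)
    (hF : ∀ k₁ k₂ k₃ : K, k₁ • F k₂ k₃ * F k₁ (k₂ * k₃) = F (k₁ * k₂) k₃ * F k₁ k₂)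
    (Fh : K → K → A →* ℂˣ)
    (hFhn : ∀ k : K, Fh 1 k = 1 ∧ Fh k 1 = 1)
    (hFh : ∀ (k₁ k₂ k₃ : K) (a : A),
      Fh k₂ k₃ a * Fh k₁ (k₂ * k₃) a = Fh (k₁ * k₂) k₃ a * Fh k₁ k₂ (k₃ • a))
 :
    (∀ (k : Fin 3 → K) (x₁ x₂ : K) (a₂ : A),
      deltaK (phiF2 F Fh) k x₁ (fun _ => (a₂, x₂)) =
        Fh (k 0) (k 1) (F (k 2) x₁ * (F (k 2) (x₁ * x₂))⁻¹)) ∧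
    (∀ (k : Fin 3 → K) (x₁ x₂ : K) (a₂ : A),
      deltaG F (uC3 F Fh k) x₁ (fun _ => (a₂, x₂)) =
        Fh (k 0) (k 1) (F (k 2) (x₁ * x₂) * (F (k 2) x₁)⁻¹)) ∧
    (deltaK (phiF2 F Fh) * fun k => deltaG F (uC3 F Fh k)) = 1 ∧
    (∀ (k : Fin 4 → K) (x : K) (e : Fin 0 → A × K),
      deltaK (uC3 F Fh) k x e = Fh (k 0) (k 1) (F (k 2) (k 3))) :=
  statement8_general F hF Fh hFh
end

section
/- Let F̂ : K × K → 𝔸 be a normalized 2-cocycle and let ε : K³ → ℂˣ be a normalized cochain with δ_K ε = F̂ ∧ F. Then the function ω : G³ → ℂˣ defined by ω((a₁,k₁),(a₂,k₂),(a₃,k₃)) := F̂(k₁,k₂)(a₃)·ε(k₁,k₂,k₃) is a normalized 3-cocycle on G = A ⋊_F K with values in ℂˣ (trivial action): for all g₁,g₂,g₃,g₄ ∈ G, ω(g₂,g₃,g₄)·ω(g₁g₂,g₃,g₄)⁻¹·ω(g₁,g₂g₃,g₄)·ω(g₁,g₂,g₃g₄)⁻¹·ω(g₁,g₂,g₃)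 = 1. -/
/-!
`ω` is the product of the inflation of `ε` from `K` to `G` and of the cochain
`(g₁,g₂,g₃) ↦ F̂(k₁,k₂)(a₃)`. The coboundary of the first is `δ_K ε = F̂(k₁,k₂)(F(k₃,k₄))`.
For the second, the `A`-component of `g₃g₄` is `a₃ · ᵏ³a₄ · F(k₃,k₄)`, and the cocycle identity of
`F̂` cancels everything except the factor `F̂(k₁,k₂)(F(k₃,k₄))⁻¹`. The two coboundaries cancel.
-/

open scoped BigOperators

/-- `ω((a₁,x₁),(a₂,x₂),(a₃,x₃)) = F̂(x₁,x₂)(a₃)·ε(x₁,x₂,x₃)`. -/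
def omegaC {A K : Type*} [CommGroup A] (Fh : K → K → A →* ℂˣ) (ε : K → K → K → ℂˣ)
    (g₁ g₂ g₃ : A × K) : ℂˣ :=
  Fh g₁.2 g₂.2 g₃.1 * ε g₁.2 g₂.2 g₃.2

section Coboundary

variable {G M : Type*} [CommGroup M]

/-- `μ` is a bare binary operation, since the product of `A ⋊_F K` is only given as `sdMul F`. -/
def coboundary3 (μ : G → G → G) (ω : G → G → G → M) (g₁ g₂ g₃ g₄ : G) : M :=
  ω g₂ g₃ g₄ * (ω (μ g₁ g₂) g₃ g₄)⁻¹ * ω g₁ (μ g₂ g₃) g₄ * (ω g₁ g₂ (μ g₃ g₄))⁻¹ * ω g₁ g₂ g₃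

theorem coboundary3_mul (μ : G → G → G) (ω ω' : G → G → G → M) :
    coboundary3 μ (ω * ω') = coboundary3 μ ω * coboundary3 μ ω' := by
  funext g₁ g₂ g₃ g₄
  simp only [coboundary3, Pi.mul_apply, mul_inv]
  ac_rfl

end Coboundary

section TwistedProduct

variable {A K M : Type*} [CommGroup A] [Group K] [MulDistribMulAction K A] [CommGroup M]

theorem coboundary3_sdMul_inflation (F : K → K → A) (ε : K → K → K → M) (g₁ g₂ g₃ g₄ : A × K) :
    coboundary3 (sdMul F) (fun h₁ h₂ h₃ => ε h₁.2 h₂.2 h₃.2) g₁ g₂ g₃ g₄ =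
      coboundary3 (· * ·) ε g₁.2 g₂.2 g₃.2 g₄.2 :=
  rfl

theorem coboundary3_sdMul_evalFhat (F : K → K → A) (Fh : K → K → A →* M)
    (hFh : ∀ (k₁ k₂ k₃ : K) (a : A),
      Fh k₂ k₃ a * Fh k₁ (k₂ * k₃) a = Fh (k₁ * k₂) k₃ a * Fh k₁ k₂ (k₃ • a))
    (g₁ g₂ g₃ g₄ : A × K) :
    coboundary3 (sdMul F) (fun h₁ h₂ h₃ => Fh h₁.2 h₂.2 h₃.1) g₁ g₂ g₃ g₄ =
      (Fh g₁.2 g₂.2 (F g₃.2 g₄.2))⁻¹ := by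
  obtain ⟨a₁, k₁⟩ := g₁; obtain ⟨a₂, k₂⟩ := g₂; obtain ⟨a₃, k₃⟩ := g₃; obtain ⟨a₄, k₄⟩ := g₄
  have hcocycle := hFh k₁ k₂ k₃ a₄
  simp only [coboundary3, sdMul, map_mul, mul_inv]
  calc _ = (Fh k₂ k₃ a₄ * Fh k₁ (k₂ * k₃) a₄) * (Fh (k₁ * k₂) k₃ a₄ * Fh k₁ k₂ (k₃ • a₄))⁻¹ *
        (Fh k₁ k₂ a₃ * (Fh k₁ k₂ a₃)⁻¹) * (Fh k₁ k₂ (F k₃ k₄))⁻¹ := by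
        simp only [mul_inv]; ac_rfl
    _ = _ := by rw [hcocycle, mul_inv_cancel, mul_inv_cancel, one_mul, one_mul]

end TwistedProduct

theorem statement11_general {A K : Type*} [CommGroup A] [Group K]
    [MulDistribMulAction K A]
    (F : K → K → A)
    (Fh : K → K → A →* ℂˣ)
    (hFhn : ∀ k : K, Fh 1 k = 1 ∧ Fh k 1 = 1)
    (hFh : ∀ (k₁ k₂ k₃ : K) (a : A),
      Fh k₂ k₃ a * Fh k₁ (k₂ * k₃) a = Fh (k₁ * k₂) k₃ a * Fh k₁ k₂ (k₃ • a))
    (ε : K → K → K → ℂˣ)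
    (hεn : ∀ k₁ k₂ k₃ : K, k₁ = 1 ∨ k₂ = 1 ∨ k₃ = 1 → ε k₁ k₂ k₃ = 1)
    (hε : ∀ k₁ k₂ k₃ k₄ : K,
      ε k₂ k₃ k₄ * (ε (k₁ * k₂) k₃ k₄)⁻¹ * ε k₁ (k₂ * k₃) k₄ * (ε k₁ k₂ (k₃ * k₄))⁻¹ *
        ε k₁ k₂ k₃ = Fh k₁ k₂ (F k₃ k₄))
 :
    (∀ g₁ g₂ g₃ : A × K,
      (g₁ = ((1 : A), (1 : K)) ∨ g₂ = ((1 : A), (1 : K)) ∨ g₃ = ((1 : A), (1 : K))) →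
        omegaC Fh ε g₁ g₂ g₃ = 1) ∧
    (∀ g₁ g₂ g₃ g₄ : A × K,
      omegaC Fh ε g₂ g₃ g₄ * (omegaC Fh ε (sdMul F g₁ g₂) g₃ g₄)⁻¹ *
        omegaC Fh ε g₁ (sdMul F g₂ g₃) g₄ * (omegaC Fh ε g₁ g₂ (sdMul F g₃ g₄))⁻¹ *
        omegaC Fh ε g₁ g₂ g₃ = 1) := by
  refine ⟨?normalized, fun g₁ g₂ g₃ g₄ => ?cocycle⟩
  case normalized =>
    rintro g₁ g₂ g₃ (rfl | rfl | rfl) <;> simp [omegaC, (hFhn _).1, (hFhn _).2, hεn]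
  case cocycle =>
    have hsplit : omegaC Fh ε =
        (fun h₁ h₂ h₃ => Fh h₁.2 h₂.2 h₃.1) * fun h₁ h₂ h₃ => ε h₁.2 h₂.2 h₃.2 := rfl
    change coboundary3 (sdMul F) (omegaC Fh ε) g₁ g₂ g₃ g₄ = 1
    simp only [hsplit, coboundary3_mul, Pi.mul_apply]
    rw [coboundary3_sdMul_evalFhat F Fh hFh, coboundary3_sdMul_inflation, coboundary3, hε,
      inv_mul_cancel]

/-- `ω((a₁,k₁),(a₂,k₂),(a₃,k₃)) = F̂(k₁,k₂)(a₃)·ε(k₁,k₂,k₃)` is a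
normalized 3-cocycle on `G = A ⋊_F K` with values in `ℂˣ` (trivial action). -/
theorem statement11 {A K : Type*} [CommGroup A] [Group K] [Finite A] [Finite K]
    [MulDistribMulAction K A]
    (F : K → K → A)
    (hFn : ∀ k : K, F 1 k = 1 ∧ F k 1 = 1)
    (hF : ∀ k₁ k₂ k₃ : K, k₁ • F k₂ k₃ * F k₁ (k₂ * k₃) = F (k₁ * k₂) k₃ * F k₁ k₂)
    (Fh : K → K → A →* ℂˣ)
    (hFhn : ∀ k : K, Fh 1 k = 1 ∧ Fh k 1 = 1)
    (hFh : ∀ (k₁ k₂ k₃ : K) (a : A),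
      Fh k₂ k₃ a * Fh k₁ (k₂ * k₃) a = Fh (k₁ * k₂) k₃ a * Fh k₁ k₂ (k₃ • a))
    (ε : K → K → K → ℂˣ)
    (hεn : ∀ k₁ k₂ k₃ : K, k₁ = 1 ∨ k₂ = 1 ∨ k₃ = 1 → ε k₁ k₂ k₃ = 1)
    (hε : ∀ k₁ k₂ k₃ k₄ : K,
      ε k₂ k₃ k₄ * (ε (k₁ * k₂) k₃ k₄)⁻¹ * ε k₁ (k₂ * k₃) k₄ * (ε k₁ k₂ (k₃ * k₄))⁻¹ *
        ε k₁ k₂ k₃ = Fh k₁ k₂ (F k₃ k₄))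
 :
    (∀ g₁ g₂ g₃ : A × K,
      (g₁ = ((1 : A), (1 : K)) ∨ g₂ = ((1 : A), (1 : K)) ∨ g₃ = ((1 : A), (1 : K))) →
        omegaC Fh ε g₁ g₂ g₃ = 1) ∧
    (∀ g₁ g₂ g₃ g₄ : A × K,
      omegaC Fh ε g₂ g₃ g₄ * (omegaC Fh ε (sdMul F g₁ g₂) g₃ g₄)⁻¹ *
        omegaC Fh ε g₁ (sdMul F g₂ g₃) g₄ * (omegaC Fh ε g₁ g₂ (sdMul F g₃ g₄))⁻¹ *
        omegaC Fh ε g₁ g₂ g₃ = 1) :=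
  statement11_general F Fh hFhn hFh ε hεn hε
end

section
/- Let G be a finite group and A ≤ G a subgroup. Let K = A\G be the set of right cosets of A in G, with right G-action (Ag)·g′ = A(gg′), and let K^A := {k ∈ K : k·a = k for all a ∈ A}. Then |Hom(A,ℂˣ)| · |K^A| = |G| if and only if A is abelian and normal in G. (Here Hom(A,ℂˣ) is the group of group homomorphisms from A to the multiplicative group of nonzero complex numbers.) -/
/-!
A coset `Ag` is fixed by every `a ∈ A` iff `gag⁻¹ ∈ A` for all `a ∈ A`, i.e. (by finiteness) iff
`g` normalizes `A`; so `K^A` is the set of right cosets of `A` in its normalizer `N`, and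
`|K^A| = [N : A]`. Since `ℂˣ` is abelian with all roots of unity, `|Hom(A, ℂˣ)| = |A / [A, A]|`.
Together, `|Hom(A, ℂˣ)| · |K^A| · |[A, A]| · [G : N] = |A| · [G : A] = |G|`, so the identity holds
exactly when `[A, A] = 1` and `N = G`.
-/

/-- The right action of `g' ∈ G` on the set `K = A\G` of right cosets:
`(Ag)·g' = A(gg')`. -/
def cosetAct {G : Type*} [Group G] (A : Subgroup G) (g' : G) :
    Quotient (QuotientGroup.rightRel A) → Quotient (QuotientGroup.rightRel A) :=
  Quotient.map (· * g') (by
    intro x y h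
    have h' : y * x⁻¹ ∈ A := QuotientGroup.rightRel_apply.mp h
    show (QuotientGroup.rightRel A) (x * g') (y * g')
    rw [QuotientGroup.rightRel_apply]
    simpa [mul_assoc] using h')

theorem card_monoidHom_units_eq_card_abelianization (H F : Type*) [Group H] [Finite H]
    [Field F] [IsSepClosed F] [CharZero F] :
    Nat.card (H →* Fˣ) = Nat.card (Abelianization H) := by
  rw [Nat.card_congr Abelianization.lift, CommGroup.card_monoidHom_of_hasEnoughRootsOfUnity]

theorem card_monoidHom_units_mul_card_commutator (H F : Type*) [Group H] [Finite H]
    [Field F] [IsSepClosed F] [CharZero F] :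
    Nat.card (H →* Fˣ) * Nat.card (commutator H) = Nat.card H := by
  rw [card_monoidHom_units_eq_card_abelianization]
  exact (Subgroup.card_eq_card_quotient_mul_card_subgroup _).symm

theorem commutator_eq_bot_iff_forall_mul_comm {G : Type*} [Group G] (A : Subgroup G) :
    commutator A = ⊥ ↔ ∀ x ∈ A, ∀ y ∈ A, x * y = y * x := by
  rw [commutator_eq_bot_iff, isMulCommutative_iff_of_setLike]

section CosetAction

variable {G : Type*} [Group G] (A : Subgroup G)

theorem cosetAct_mk (g g' : G) :
    cosetAct A g' (Quotient.mk _ g) = Quotient.mk _ (g * g') := rfl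

theorem forall_cosetAct_mk_eq_iff_mem_normalizer [Finite A] (g : G) :
    (∀ a : A, cosetAct A a (Quotient.mk _ g) = Quotient.mk _ g) ↔
      g ∈ Subgroup.normalizer (A : Set G) := by
  simp only [cosetAct_mk, Quotient.eq, QuotientGroup.rightRel_apply, mul_inv_rev, ← mul_assoc]
  constructor
  · intro h
    refine Subgroup.mem_normalizer_fintype fun n hn => ?_
    simpa [mul_assoc] using A.inv_mem (h ⟨n, hn⟩)
  · intro hg a
    exact (Subgroup.mem_normalizer_iff.mp hg _).mp (A.inv_mem a.2)

def fixedCosetsEquivNormalizerQuotient [Finite A] :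
    {k // ∀ a : A, cosetAct A a k = k} ≃
      Quotient (QuotientGroup.rightRel (A.subgroupOf (Subgroup.normalizer (A : Set G)))) :=
  Equiv.subtypeQuotientEquivQuotientSubtype _ _
    (fun g => (forall_cosetAct_mk_eq_iff_mem_normalizer A g).symm)
    (fun x y => by simp [QuotientGroup.rightRel_apply, Subgroup.mem_subgroupOf])

theorem card_fixedCosets [Finite A] :
    Nat.card {k // ∀ a : A, cosetAct A a k = k} =
      A.relIndex (Subgroup.normalizer (A : Set G)) :=
  Nat.card_congr ((fixedCosetsEquivNormalizerQuotient A).trans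
    (QuotientGroup.quotientRightRelEquivQuotientLeftRel _))

end CosetAction

theorem card_monoidHom_units_mul_card_fixedCosets_mul (G F : Type*) [Group G] [Finite G]
    [Field F] [IsSepClosed F] [CharZero F] (A : Subgroup G) :
    Nat.card (A →* Fˣ) * Nat.card {k // ∀ a : A, cosetAct A a k = k} *
        (Nat.card (commutator A) * (Subgroup.normalizer (A : Set G)).index) = Nat.card G :=
  calc _ = Nat.card (A →* Fˣ) * Nat.card (commutator A) *
          (A.relIndex (Subgroup.normalizer (A : Set G)) *
            (Subgroup.normalizer (A : Set G)).index) := by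
        rw [card_fixedCosets]; ring
    _ = Nat.card A * A.index := by
        rw [card_monoidHom_units_mul_card_commutator,
          Subgroup.relIndex_mul_index Subgroup.le_normalizer]
    _ = Nat.card G := A.card_mul_index

/-- For a finite group `G` with a subgroup `A`, letting
`K = A\G` with its right `G`-action and `K^A = {k ∈ K : k·a = k for all a ∈ A}`,
one has `|Hom(A,ℂˣ)| · |K^A| = |G|` if and only if `A` is abelian and normal in `G`. -/
theorem statement13 (G : Type*) [Group G] [Fintype G] (A : Subgroup G) :
    Nat.card (A →* ℂˣ) *
        Nat.card {k : Quotient (QuotientGroup.rightRel A) //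
          ∀ a : A, cosetAct A (a : G) k = k} =
      Nat.card G ↔ ((∀ x ∈ A, ∀ y ∈ A, x * y = y * x) ∧ A.Normal) := by
  have key := card_monoidHom_units_mul_card_fixedCosets_mul G ℂ A
  have hne : Nat.card (A →* ℂˣ) * Nat.card {k // ∀ a : A, cosetAct A a k = k} ≠ 0 :=
    left_ne_zero_of_mul (key ▸ Nat.card_pos.ne')
  rw [← commutator_eq_bot_iff_forall_mul_comm, ← Subgroup.normalizer_eq_top_iff,
    ← Subgroup.card_eq_one, ← Subgroup.index_eq_one, ← mul_eq_one, ← key, eq_comm,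
    mul_eq_left₀ hne]
end
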